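/- arXiv:1712.05047 — 10 statements merged into one kernel-verified Lean document; each statement's English description precedes it below -/
import Mathlib

section
/- Let K be a field of characteristic different from 2, let E be an elliptic curve over K given by y² = f(x) with f ∈ K[x] a monic cubic without repeated roots, and let a be a nonzero element of K. Then the following are equivalent: (i) E(K) contains exactly one point of order 2 and contains a point of order 4; (ii) there exists a nonzero b ∈ K such that a² + 4b is not a square in K and E is K-isomorphic to the elliptic curve E⁽⁴⁾_{a,b} : y² = (x² + (a² + 2b)x + b²)·x. -/
/-!
With `a₁ = a₃ = 0` and `2` invertible, the points of order 2 are the `(x, 0)` with `x` a root of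
the cubic, and `P` has order 4 exactly when `2P` has order 2. Moving a root `r` to the origin, the
curve becomes `y² = x (x² + A x + B)` with `A = a₂ + 3r`, `B = a₄ + 2r a₂ + 3r²`. Then `(r, 0)` is a
double `2P` iff `A = ℓ² - 2t` and `B = t²` for some nonzero `ℓ, t` (`ℓ` is the slope of the tangent
at `P = (r + t, ℓt)`, which meets the curve again only at `(r, 0)`), and `r` is the only root iff
`A² - 4B` is not a square. The scaling `u = ℓ / a`, `b = -t / u²` turns `A, B` into `u²(a² + 2b)`,
`u⁴b²`, and then `A² - 4B = (u²a)²(a² + 4b)`.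
-/

open WeierstrassCurve

open Classical

lemma isSquare_sq_mul_iff {K : Type*} [Field K] {c z : K} (hc : c ≠ 0) :
    IsSquare (c ^ 2 * z) ↔ IsSquare z := by
  refine ⟨fun h => ?_, (IsSquare.sq c).mul⟩
  simpa [hc] using h.div (IsSquare.sq c)

lemma isSquare_discrim_versal_iff {K : Type*} [Field K] {a b u : K} (ha : a ≠ 0) (hu : u ≠ 0) :
    IsSquare (discrim 1 (u ^ 2 * (a ^ 2 + 2 * b)) (u ^ 4 * b ^ 2)) ↔ IsSquare (a ^ 2 + 4 * b) := by
  convert isSquare_sq_mul_iff (mul_ne_zero (pow_ne_zero 2 hu) ha) using 2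
  rw [discrim]
  ring

lemma exists_tangent_params_iff_exists_versal_params {K : Type*} [Field K] {a : K} (ha : a ≠ 0)
    (A B : K) :
    (∃ ℓ t : K, ℓ ≠ 0 ∧ t ≠ 0 ∧ A = ℓ ^ 2 - 2 * t ∧ B = t ^ 2) ↔
      ∃ b u : K, b ≠ 0 ∧ u ≠ 0 ∧ A = u ^ 2 * (a ^ 2 + 2 * b) ∧ B = u ^ 4 * b ^ 2 := by
  constructor
  · rintro ⟨ℓ, t, hℓ, ht, rfl, rfl⟩
    have hu : ℓ / a ≠ 0 := div_ne_zero hℓ ha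
    refine ⟨-t / (ℓ / a) ^ 2, ℓ / a, by simp [ht, hu], hu, ?_, ?_⟩
    · field_simp; ring
    · field_simp
  · rintro ⟨b, u, hb, hu, rfl, rfl⟩
    exact ⟨u * a, -u ^ 2 * b, mul_ne_zero hu ha, by simp [hu, hb], by ring, by ring⟩

lemma addOrderOf_eq_four_iff {G : Type*} [AddMonoid G] (P : G) :
    addOrderOf P = 4 ↔ addOrderOf (2 • P) = 2 := by
  refine ⟨fun h => by rw [addOrderOf_nsmul' P two_ne_zero, h]; rfl, fun h => ?_⟩
  have : Fact (Nat.Prime 2) := ⟨Nat.prime_two⟩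
  refine addOrderOf_eq_prime_pow (p := 2) (n := 1) ?_ ?_
  · rw [pow_one, ← AddMonoid.addOrderOf_eq_one_iff, h]; decide
  · have h4 := addOrderOf_nsmul_eq_zero (2 • P)
    rwa [h, ← mul_nsmul] at h4

namespace WeierstrassCurve

lemma exists_variableChange_eq_iff {K : Type*} [Field K] (h2 : (2 : K) ≠ 0)
    {E : WeierstrassCurve K} (h₁ : E.a₁ = 0) (h₃ : E.a₃ = 0) (A B D : K) :
    (∃ C : VariableChange K, C • E = ⟨0, A, 0, B, D⟩) ↔ ∃ u r : K, u ≠ 0 ∧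
      E.a₂ + 3 * r = u ^ 2 * A ∧ E.a₄ + 2 * r * E.a₂ + 3 * r ^ 2 = u ^ 4 * B ∧
      r ^ 3 + E.a₂ * r ^ 2 + E.a₄ * r + E.a₆ = u ^ 6 * D := by
  constructor
  · rintro ⟨⟨u, r, s, t⟩, hC⟩
    have hu := u.ne_zero
    obtain ⟨e₁, e₂, e₃, e₄, e₆⟩ := WeierstrassCurve.ext_iff.mp hC
    simp only [variableChange_a₁, variableChange_a₂, variableChange_a₃, variableChange_a₄,
      variableChange_a₆, h₁, h₃, Units.val_inv_eq_inv_val] at e₁ e₂ e₃ e₄ e₆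
    obtain rfl : s = 0 := by simpa [hu, h2] using e₁
    obtain rfl : t = 0 := by simpa [hu, h2] using e₃
    refine ⟨u, r, hu, ?_, ?_, ?_⟩
    · field_simp at e₂; linear_combination e₂
    · field_simp at e₄; linear_combination e₄
    · field_simp at e₆; linear_combination e₆
  · rintro ⟨u, r, hu, hA, hB, hD⟩
    refine ⟨⟨Units.mk0 u hu, r, 0, 0⟩, ?_⟩
    ext <;> simp only [variableChange_a₁, variableChange_a₂, variableChange_a₃, variableChange_a₄,
      variableChange_a₆, h₁, h₃, Units.val_inv_eq_inv_val, Units.val_mk0] <;> field_simp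
    · ring
    · linear_combination hA
    · ring
    · linear_combination hB
    · linear_combination hD

namespace Affine

variable {F : Type*} [Field F] {W : Affine F}

lemma negY_eq_neg (h₁ : W.a₁ = 0) (h₃ : W.a₃ = 0) (x y : F) : W.negY x y = -y := by
  simp [negY, h₁, h₃]

lemma ne_negY_iff (h2 : (2 : F) ≠ 0) (h₁ : W.a₁ = 0) (h₃ : W.a₃ = 0) {x y : F} :
    y ≠ W.negY x y ↔ y ≠ 0 := by
  rw [negY_eq_neg h₁ h₃, ne_eq, eq_neg_iff_add_eq_zero, ← two_mul, mul_eq_zero, not_or]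
  exact and_iff_right h2

lemma slope_self_mul_two_mul (h₁ : W.a₁ = 0) (h₃ : W.a₃ = 0) {x y : F} (hy : y ≠ W.negY x y) :
    W.slope x x y y * (2 * y) = 3 * x ^ 2 + 2 * W.a₂ * x + W.a₄ := by
  rw [slope_of_Y_ne rfl hy, div_mul_eq_mul_div, div_eq_iff (sub_ne_zero.mpr hy),
    negY_eq_neg h₁ h₃, h₁]
  ring

lemma Point.addOrderOf_eq_two_iff (h2 : (2 : F) ≠ 0) (h₁ : W.a₁ = 0) (h₃ : W.a₃ = 0)
    (P : W.Point) : addOrderOf P = 2 ↔ ∃ x h, P = .some x 0 h := by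
  have : Fact (Nat.Prime 2) := ⟨Nat.prime_two⟩
  rw [addOrderOf_eq_prime_iff, two_nsmul, add_eq_zero_iff_eq_neg]
  cases P with
  | zero => simp [← zero_def]
  | some x y h =>
    simp only [neg_some, some.injEq, true_and, negY_eq_neg h₁ h₃, eq_neg_iff_add_eq_zero,
      ← two_mul, mul_eq_zero, h2, false_or, ne_eq, some_ne_zero, not_false_eq_true, and_true]
    exact ⟨fun hy => ⟨x, hy ▸ h, rfl, hy⟩, fun ⟨_, _, _, hy⟩ => hy⟩

lemma Point.existsUnique_addOrderOf_eq_two_iff (h2 : (2 : F) ≠ 0) (h₁ : W.a₁ = 0)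
    (h₃ : W.a₃ = 0) (hΔ : W.Δ ≠ 0) {r : F} (hr : W.Nonsingular r 0) :
    (∃! P : W.Point, addOrderOf P = 2) ↔ ∀ x, W.Equation x 0 → x = r := by
  have hT : addOrderOf (some r 0 hr) = 2 := (addOrderOf_eq_two_iff h2 h₁ h₃ _).mpr ⟨r, hr, rfl⟩
  constructor
  · intro hu x hx
    have hx' := (equation_iff_nonsingular_of_Δ_ne_zero hΔ).mp hx
    have := hu.unique ((addOrderOf_eq_two_iff h2 h₁ h₃ _).mpr ⟨x, hx', rfl⟩) hT
    exact (some.inj this).1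
  · intro h
    refine ⟨_, hT, fun P hP => ?_⟩
    obtain ⟨x, hx, rfl⟩ := (addOrderOf_eq_two_iff h2 h₁ h₃ P).mp hP
    obtain rfl := h x hx.1
    rfl

lemma forall_equation_zero_eq_iff (h2 : (2 : F) ≠ 0) (h₁ : W.a₁ = 0) (h₃ : W.a₃ = 0) {r : F}
    (hr : W.Equation r 0) (hB : W.a₄ + 2 * r * W.a₂ + 3 * r ^ 2 ≠ 0) :
    (∀ x, W.Equation x 0 → x = r) ↔
      ¬IsSquare (discrim 1 (W.a₂ + 3 * r) (W.a₄ + 2 * r * W.a₂ + 3 * r ^ 2)) := by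
  have : NeZero (2 : F) := ⟨h2⟩
  set A := W.a₂ + 3 * r
  set B := W.a₄ + 2 * r * W.a₂ + 3 * r ^ 2
  have key : ∀ x, W.Equation x 0 ↔ (x - r) * (1 * ((x - r) * (x - r)) + A * (x - r) + B) = 0 := by
    intro x
    rw [equation_iff] at hr ⊢
    rw [h₁, h₃] at hr ⊢
    constructor <;> intro h <;> linear_combination -h + hr
  constructor
  · rintro huniq ⟨s, hs⟩
    obtain ⟨t, ht⟩ := exists_quadratic_eq_zero one_ne_zero ⟨s, hs⟩
    have := huniq (r + t) ((key _).mpr (by rw [add_sub_cancel_left, ht, mul_zero]))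
    obtain rfl : t = 0 := by simpa using this
    exact hB (by simpa using ht)
  · intro hns x hx
    by_contra hxr
    have hq := (mul_eq_zero.mp ((key x).mp hx)).resolve_left (sub_ne_zero.mpr hxr)
    exact hns ⟨_, (discrim_eq_sq_of_quadratic_eq_zero hq).trans (sq _)⟩

lemma Point.exists_nonsingular_add_self_eq_some (h2 : (2 : F) ≠ 0) (h₁ : W.a₁ = 0)
    (h₃ : W.a₃ = 0) {r ℓ t : F} (hr : W.Nonsingular r 0) (hℓ : ℓ ≠ 0) (ht : t ≠ 0)
    (hA : W.a₂ + 3 * r = ℓ ^ 2 - 2 * t) (hB : W.a₄ + 2 * r * W.a₂ + 3 * r ^ 2 = t ^ 2) :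
    ∃ h : W.Nonsingular (r + t) (ℓ * t), some _ _ h + some _ _ h = some r 0 hr := by
  have hy : ℓ * t ≠ W.negY (r + t) (ℓ * t) := (ne_negY_iff h2 h₁ h₃).mpr (mul_ne_zero hℓ ht)
  have hf := (equation_iff r 0).mp hr.1
  have h : W.Nonsingular (r + t) (ℓ * t) := by
    refine (nonsingular_iff _ _).mpr ⟨(equation_iff _ _).mpr ?_, Or.inr hy⟩
    rw [h₁, h₃]
    linear_combination hf - t * hB - t ^ 2 * hA
  have hslope : W.slope (r + t) (r + t) (ℓ * t) (ℓ * t) = ℓ := by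
    apply mul_right_cancel₀ (mul_ne_zero h2 (mul_ne_zero hℓ ht))
    linear_combination slope_self_mul_two_mul h₁ h₃ hy + hB + 2 * t * hA
  refine ⟨h, ?_⟩
  rw [add_self_of_Y_ne hy, some.injEq, hslope]
  simp only [addY, negAddY, addX, negY_eq_neg h₁ h₃, h₁]
  constructor
  · linear_combination -hA
  · linear_combination ℓ * hA

lemma Point.exists_add_self_eq_some_iff (h2 : (2 : F) ≠ 0) (h₁ : W.a₁ = 0) (h₃ : W.a₃ = 0)
    {r : F} (hr : W.Nonsingular r 0) :
    (∃ P : W.Point, P + P = .some r 0 hr) ↔ ∃ ℓ t : F, ℓ ≠ 0 ∧ t ≠ 0 ∧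
      W.a₂ + 3 * r = ℓ ^ 2 - 2 * t ∧ W.a₄ + 2 * r * W.a₂ + 3 * r ^ 2 = t ^ 2 := by
  constructor
  · rintro ⟨_ | ⟨x, y, h⟩, hP⟩
    · exact absurd hP.symm (some_ne_zero hr)
    by_cases hy : y = W.negY x y
    · exact absurd (add_self_of_Y_eq hy ▸ hP).symm (some_ne_zero hr)
    rw [add_self_of_Y_ne hy, some.injEq] at hP
    obtain ⟨hX, hY⟩ := hP
    set ℓ := W.slope x x y y
    have hslope : ℓ * (2 * y) = 3 * x ^ 2 + 2 * W.a₂ * x + W.a₄ :=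
      slope_self_mul_two_mul h₁ h₃ hy
    have hℓt : y = ℓ * (x - r) := by
      simp only [addY, negAddY, negY_eq_neg h₁ h₃, hX] at hY
      linear_combination -hY
    simp only [addX, h₁] at hX
    have hy₀ : ℓ * (x - r) ≠ 0 := hℓt ▸ (ne_negY_iff h2 h₁ h₃).mp hy
    refine ⟨ℓ, x - r, left_ne_zero_of_mul hy₀, right_ne_zero_of_mul hy₀, ?_, ?_⟩
    · linear_combination -hX
    · linear_combination -hslope + 2 * ℓ * hℓt + 2 * (x - r) * hX
  · rintro ⟨ℓ, t, hℓ, ht, hA, hB⟩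
    obtain ⟨h, hP⟩ := exists_nonsingular_add_self_eq_some h2 h₁ h₃ hr hℓ ht hA hB
    exact ⟨_, hP⟩

end Affine

end WeierstrassCurve

/-- versal family of elliptic curves with a point of order 4 and exactly one
point of order 2, over a field of characteristic ≠ 2. -/
theorem order_four_versal_family {K : Type*} [Field K] (h2 : (2 : K) ≠ 0)
    (E : WeierstrassCurve K) (hE₁ : E.a₁ = 0) (hE₃ : E.a₃ = 0) (hΔ : E.Δ ≠ 0)
    (a : K) (ha : a ≠ 0) :
    ((∃! P : E.toAffine.Point, addOrderOf P = 2) ∧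
      ∃ P : E.toAffine.Point, addOrderOf P = 4) ↔
    ∃ b : K, b ≠ 0 ∧ ¬ IsSquare (a ^ 2 + 4 * b) ∧
      ∃ C : VariableChange K,
        C • E =
          ⟨0, a ^ 2 + 2 * b, 0, b ^ 2, 0⟩ := by
  simp only [exists_variableChange_eq_iff h2 hE₁ hE₃]
  constructor
  · rintro ⟨huniq, P, hP⟩
    rw [addOrderOf_eq_four_iff, two_nsmul, Affine.Point.addOrderOf_eq_two_iff h2 hE₁ hE₃] at hP
    obtain ⟨r, hr, h2P⟩ := hP
    obtain ⟨b, u, hb, hu, hA, hB⟩ := (exists_tangent_params_iff_exists_versal_params ha _ _).mp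
      ((Affine.Point.exists_add_self_eq_some_iff h2 hE₁ hE₃ hr).mp ⟨P, h2P⟩)
    have hB₀ := hB ▸ mul_ne_zero (pow_ne_zero 4 hu) (pow_ne_zero 2 hb)
    have hns := (Affine.forall_equation_zero_eq_iff h2 hE₁ hE₃ hr.1 hB₀).mp
      ((Affine.Point.existsUnique_addOrderOf_eq_two_iff h2 hE₁ hE₃ hΔ hr).mp huniq)
    rw [hA, hB, isSquare_discrim_versal_iff ha hu] at hns
    exact ⟨b, hb, hns, u, r, hu, hA, hB, by linear_combination -(Affine.equation_iff r 0).mp hr.1⟩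
  · rintro ⟨b, hb, hns, u, r, hu, hA, hB, hD⟩
    have hr : E.toAffine.Nonsingular r 0 := (Affine.equation_iff_nonsingular_of_Δ_ne_zero hΔ).mp
      ((Affine.equation_iff r 0).mpr (by rw [hE₁, hE₃]; linear_combination -hD))
    have hB₀ := hB ▸ mul_ne_zero (pow_ne_zero 4 hu) (pow_ne_zero 2 hb)
    refine ⟨(Affine.Point.existsUnique_addOrderOf_eq_two_iff h2 hE₁ hE₃ hΔ hr).mpr
      ((Affine.forall_equation_zero_eq_iff h2 hE₁ hE₃ hr.1 hB₀).mpr ?_), ?_⟩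
    · rwa [hA, hB, isSquare_discrim_versal_iff ha hu]
    obtain ⟨P, hP⟩ := (Affine.Point.exists_add_self_eq_some_iff h2 hE₁ hE₃ hr).mpr
      ((exists_tangent_params_iff_exists_versal_params ha _ _).mpr ⟨b, u, hb, hu, hA, hB⟩)
    refine ⟨P, (addOrderOf_eq_four_iff P).mpr ?_⟩
    rw [two_nsmul, hP]
    exact (Affine.Point.addOrderOf_eq_two_iff h2 hE₁ hE₃ _).mpr ⟨r, hr, rfl⟩
end

section
/- Let K be a field of characteristic different from 2 and let E be an elliptic curve over K given by y² = f(x) with f ∈ K[x] a monic cubic without repeated roots. Then the following are equivalent: (i) E(K) contains exactly one point of order 2 and contains a point of order 6; (ii) there exists t ∈ K with t ∉ {0, −4, 1/2} such that t² + 4t is not a square in K and E is K-isomorphic to the elliptic curve E⁽⁶⁾_t : y² = (x² + (t² + 2t)x + t²)(x + 1). -/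
/-!
Write `E⁽⁶⁾_t = flexCurve (t + 1) t`, where `flexCurve m c` is `y² = x³ + (m x + c)²`.

A variable change induces an isomorphism of point groups, so both sides of the equivalence are
invariant under it. On `y² = f(x)`, with `2 ≠ 0`, the points of order two are the `(e, 0)` with
`f(e) = 0`, and `(0, c)` with `c ≠ 0` has order three iff `a₄² = 4c²a₂`, i.e. iff the curve is
`flexCurve m c`. So if `P` has order six, translating `2P` to `(0, c)` puts the curve in the form
`flexCurve m c`, and the abscissa `e` of `3P` gives a scaling `u` with `u² = -e` that carries
it to `E⁽⁶⁾_t`, `t = c / u³`. Conversely, on `E⁽⁶⁾_t` the point `(0, t) + (-1, 0)` has order six.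
Finally `Δ(E⁽⁶⁾_t) = 16t³(t + 4)(2t - 1)²`, and `f = (x + 1)(x² + (t² + 2t)x + t²)`, where the
quadratic factor has discriminant `t²(t² + 4t)` and does not vanish at `-1` when `t ≠ 1/2`.
-/

namespace WeierstrassCurve.VariableChange

variable {R : Type*} [CommRing R] (C : VariableChange R)

/-- The point `(x, y)` of `C • W` corresponds to the point `(C.mapX x, C.mapY x y)` of `W`. -/
def mapX (x : R) : R := C.u ^ 2 * x + C.r

def mapY (x y : R) : R := C.u ^ 3 * y + C.u ^ 2 * C.s * x + C.t

end WeierstrassCurve.VariableChange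

namespace WeierstrassCurve.Affine

open VariableChange

variable {F : Type*} [Field F] (W : WeierstrassCurve F) (C : VariableChange F)

lemma evalEval_polynomial_variableChange (x y : F) :
    W.toAffine.polynomial.evalEval (C.mapX x) (C.mapY x y) =
      C.u ^ 6 * (C • W).toAffine.polynomial.evalEval x y := by
  simp only [evalEval_polynomial, mapX, mapY, variableChange_a₁, variableChange_a₂,
    variableChange_a₃, variableChange_a₄, variableChange_a₆, Units.val_inv_eq_inv_val]
  field_simp
  ring

lemma evalEval_polynomialY_variableChange (x y : F) :
    W.toAffine.polynomialY.evalEval (C.mapX x) (C.mapY x y) =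
      C.u ^ 3 * (C • W).toAffine.polynomialY.evalEval x y := by
  simp only [evalEval_polynomialY, mapX, mapY, variableChange_a₁,
    variableChange_a₃, Units.val_inv_eq_inv_val]
  field_simp
  ring

lemma evalEval_polynomialX_variableChange (x y : F) :
    W.toAffine.polynomialX.evalEval (C.mapX x) (C.mapY x y) =
      C.u ^ 4 * (C • W).toAffine.polynomialX.evalEval x y -
        C.s * C.u ^ 3 * (C • W).toAffine.polynomialY.evalEval x y := by
  simp only [evalEval_polynomialX, evalEval_polynomialY, mapX, mapY, variableChange_a₁,
    variableChange_a₂, variableChange_a₃, variableChange_a₄, Units.val_inv_eq_inv_val]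
  field_simp
  ring

variable {W C}

lemma mapX_injective : Function.Injective C.mapX := fun x₁ x₂ h => by
  simpa [mapX] using h

lemma mapY_injective (x : F) : Function.Injective (C.mapY x) := fun y₁ y₂ h => by
  simpa [mapY] using h

lemma equation_variableChange_iff (x y : F) :
    W.toAffine.Equation (C.mapX x) (C.mapY x y) ↔ (C • W).toAffine.Equation x y := by
  simp [Equation, evalEval_polynomial_variableChange]

lemma nonsingular_variableChange_iff (x y : F) :
    W.toAffine.Nonsingular (C.mapX x) (C.mapY x y) ↔ (C • W).toAffine.Nonsingular x y := by
  rw [Nonsingular, Nonsingular, equation_variableChange_iff, evalEval_polynomialX_variableChange,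
    evalEval_polynomialY_variableChange]
  refine and_congr_right fun _ => ?_
  rw [← not_and_or, ← not_and_or, not_iff_not]
  have hu3 : (C.u : F) ^ 3 ≠ 0 := pow_ne_zero 3 C.u.ne_zero
  have hu4 : (C.u : F) ^ 4 ≠ 0 := pow_ne_zero 4 C.u.ne_zero
  constructor
  · rintro ⟨hX, hY⟩
    have hY' := (mul_eq_zero.mp hY).resolve_left hu3
    rw [hY', mul_zero, sub_zero] at hX
    exact ⟨(mul_eq_zero.mp hX).resolve_left hu4, hY'⟩
  · rintro ⟨hX, hY⟩
    simp [hX, hY]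

lemma negY_variableChange (x y : F) :
    W.toAffine.negY (C.mapX x) (C.mapY x y) = C.mapY x ((C • W).toAffine.negY x y) := by
  simp only [negY, mapX, mapY, variableChange_a₁, variableChange_a₃, Units.val_inv_eq_inv_val]
  field_simp
  ring

lemma addX_variableChange (x₁ x₂ ℓ : F) :
    W.toAffine.addX (C.mapX x₁) (C.mapX x₂) (C.u * ℓ + C.s) =
      C.mapX ((C • W).toAffine.addX x₁ x₂ ℓ) := by
  simp only [addX, mapX, variableChange_a₁, variableChange_a₂, Units.val_inv_eq_inv_val]
  field_simp
  ring

lemma negAddY_variableChange (x₁ x₂ y₁ ℓ : F) :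
    W.toAffine.negAddY (C.mapX x₁) (C.mapX x₂) (C.mapY x₁ y₁) (C.u * ℓ + C.s) =
      C.mapY ((C • W).toAffine.addX x₁ x₂ ℓ) ((C • W).toAffine.negAddY x₁ x₂ y₁ ℓ) := by
  rw [negAddY, addX_variableChange, negAddY]
  simp only [mapX, mapY]
  ring

lemma addY_variableChange (x₁ x₂ y₁ ℓ : F) :
    W.toAffine.addY (C.mapX x₁) (C.mapX x₂) (C.mapY x₁ y₁) (C.u * ℓ + C.s) =
      C.mapY ((C • W).toAffine.addX x₁ x₂ ℓ) ((C • W).toAffine.addY x₁ x₂ y₁ ℓ) := by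
  rw [addY, addX_variableChange, negAddY_variableChange, negY_variableChange, addY]

lemma exists_mapX_mapY_eq (X Y : F) : ∃ x y, C.mapX x = X ∧ C.mapY x y = Y := by
  have hu : (C.u : F) ≠ 0 := C.u.ne_zero
  refine ⟨(X - C.r) / C.u ^ 2, (Y - C.s * (X - C.r) - C.t) / C.u ^ 3, ?_, ?_⟩ <;>
  · simp only [mapX, mapY]
    field_simp
    ring

variable [DecidableEq F]

lemma slope_variableChange {x₁ x₂ y₁ y₂ : F} (h₁ : (C • W).toAffine.Equation x₁ y₁)
    (h₂ : (C • W).toAffine.Equation x₂ y₂)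
    (hxy : ¬(x₁ = x₂ ∧ y₁ = (C • W).toAffine.negY x₂ y₂)) :
    W.toAffine.slope (C.mapX x₁) (C.mapX x₂) (C.mapY x₁ y₁) (C.mapY x₂ y₂) =
      C.u * (C • W).toAffine.slope x₁ x₂ y₁ y₂ + C.s := by
  by_cases hx : x₁ = x₂
  · have hy : y₁ ≠ (C • W).toAffine.negY x₂ y₂ := fun hy => hxy ⟨hx, hy⟩
    obtain rfl := hx
    obtain rfl := Y_eq_of_Y_ne h₁ h₂ rfl hy
    have hY : C.mapY x₁ y₁ ≠ W.toAffine.negY (C.mapX x₁) (C.mapY x₁ y₁) := by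
      rw [negY_variableChange]
      exact (mapY_injective x₁).ne hy
    have hp : (C • W).toAffine.polynomialY.evalEval x₁ y₁ ≠ 0 := by
      rw [evalEval_polynomialY]
      contrapose! hy
      rw [negY]
      linear_combination hy
    rw [slope_of_Y_ne_eq_evalEval rfl hy, slope_of_Y_ne_eq_evalEval rfl hY,
      evalEval_polynomialX_variableChange, evalEval_polynomialY_variableChange]
    field_simp
    ring
  · have hX : C.mapX x₁ ≠ C.mapX x₂ := mapX_injective.ne hx
    have hd : C.mapX x₁ - C.mapX x₂ = C.u ^ 2 * (x₁ - x₂) := by simp only [mapX]; ring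
    have : x₁ - x₂ ≠ 0 := sub_ne_zero.mpr hx
    rw [slope_of_X_ne hx, slope_of_X_ne hX, hd, mapY, mapY]
    field_simp
    ring

namespace Point

variable (W C) in
noncomputable def variableChangeHom : (C • W).toAffine.Point →+ W.toAffine.Point where
  toFun P := match P with
    | 0 => 0
    | some x y h => some (C.mapX x) (C.mapY x y) ((nonsingular_variableChange_iff x y).mpr h)
  map_zero' := rfl
  map_add' := by
    rintro (_ | ⟨x₁, y₁, h₁⟩) (_ | ⟨x₂, y₂, h₂⟩)
    any_goals rfl
    by_cases hxy : x₁ = x₂ ∧ y₁ = (C • W).toAffine.negY x₂ y₂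
    · rw [add_of_Y_eq hxy.1 hxy.2, add_of_Y_eq (congr_arg _ hxy.1)
        (by rw [hxy.1, hxy.2, negY_variableChange])]
    · have hXY : ¬(C.mapX x₁ = C.mapX x₂ ∧
          C.mapY x₁ y₁ = W.toAffine.negY (C.mapX x₂) (C.mapY x₂ y₂)) := by
        rintro ⟨hX, hY⟩
        obtain rfl := mapX_injective hX
        rw [negY_variableChange] at hY
        exact hxy ⟨rfl, mapY_injective x₁ hY⟩
      rw [add_some hxy, add_some hXY]
      simp only [some.injEq]
      rw [slope_variableChange h₁.1 h₂.1 hxy, addX_variableChange, addY_variableChange]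
      exact ⟨rfl, rfl⟩

lemma variableChangeHom_bijective : Function.Bijective (variableChangeHom W C) := by
  constructor
  · rintro (_ | ⟨x₁, y₁, h₁⟩) (_ | ⟨x₂, y₂, h₂⟩) h
    · rfl
    · exact absurd h.symm (some_ne_zero _)
    · exact absurd h (some_ne_zero _)
    · obtain ⟨hX, hY⟩ := some.inj h
      obtain rfl := mapX_injective hX
      obtain rfl := mapY_injective x₁ hY
      rfl
  · rintro (_ | ⟨X, Y, h⟩)
    · exact ⟨0, rfl⟩
    · obtain ⟨x, y, rfl, rfl⟩ := exists_mapX_mapY_eq (C := C) X Y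
      exact ⟨some x y ((nonsingular_variableChange_iff x y).mp h), rfl⟩

variable (W C) in
noncomputable def variableChangeEquiv : (C • W).toAffine.Point ≃+ W.toAffine.Point :=
  AddEquiv.ofBijective _ variableChangeHom_bijective

lemma variableChangeEquiv_some {x y : F} (h : (C • W).toAffine.Nonsingular x y) :
    variableChangeEquiv W C (some x y h) =
      some (C.mapX x) (C.mapY x y) ((nonsingular_variableChange_iff x y).mpr h) :=
  rfl

variable (W C) in
lemma existsUnique_addOrderOf_variableChange_iff (n : ℕ) :
    (∃! P : (C • W).toAffine.Point, addOrderOf P = n) ↔ ∃! P : W.toAffine.Point, addOrderOf P = n :=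
  (variableChangeEquiv W C).toEquiv.existsUnique_congr fun P => by
    rw [← AddEquiv.addOrderOf_eq (variableChangeEquiv W C) P]; rfl

variable (W C) in
lemma exists_addOrderOf_variableChange_iff (n : ℕ) :
    (∃ P : (C • W).toAffine.Point, addOrderOf P = n) ↔ ∃ P : W.toAffine.Point, addOrderOf P = n :=
  (variableChangeEquiv W C).toEquiv.exists_congr fun P => by
    rw [← AddEquiv.addOrderOf_eq (variableChangeEquiv W C) P]; rfl

end Point

end WeierstrassCurve.Affine

namespace WeierstrassCurve.Affine

variable {F : Type*} [Field F] {W : WeierstrassCurve F} (h2 : (2 : F) ≠ 0) (h₁ : W.a₁ = 0)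
  (h₃ : W.a₃ = 0)
include h2 h₁ h₃

lemma negY_eq_self_iff (x y : F) : W.toAffine.negY x y = y ↔ y = 0 := by
  rw [negY, h₁, h₃]
  constructor
  · intro h
    exact (mul_eq_zero.mp (by linear_combination -h : (2 : F) * y = 0)).resolve_left h2
  · rintro rfl
    ring

variable [DecidableEq F]

namespace Point

lemma addOrderOf_eq_two_iff_s2 (P : W.toAffine.Point) :
    addOrderOf P = 2 ↔ ∃ (x : F) (h : W.toAffine.Nonsingular x 0), P = some x 0 h := by
  have : Fact (Nat.Prime 2) := ⟨Nat.prime_two⟩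
  rw [addOrderOf_eq_prime_iff, two_nsmul, add_eq_zero_iff_eq_neg]
  rcases P with _ | ⟨x, y, h⟩
  · exact iff_of_false (fun h => h.2 rfl) (by rintro ⟨_, _, ⟨⟩⟩)
  · rw [neg_some, some.injEq, eq_comm (a := y), negY_eq_self_iff h2 h₁ h₃]
    constructor
    · rintro ⟨⟨-, rfl⟩, -⟩
      exact ⟨x, h, rfl⟩
    · rintro ⟨x, h, ⟨⟩⟩
      exact ⟨⟨rfl, rfl⟩, some_ne_zero _⟩

lemma existsUnique_addOrderOf_eq_two_iff_s2 (hΔ : W.Δ ≠ 0) :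
    (∃! P : W.toAffine.Point, addOrderOf P = 2) ↔ ∃! x : F, W.toAffine.Equation x 0 := by
  have hns {x : F} (hx : W.toAffine.Equation x 0) : W.toAffine.Nonsingular x 0 :=
    (equation_iff_nonsingular_of_Δ_ne_zero hΔ).mp hx
  constructor
  · rintro ⟨P, hP, huniq⟩
    obtain ⟨x, h, rfl⟩ := (addOrderOf_eq_two_iff_s2 h2 h₁ h₃ _).mp hP
    refine ⟨x, h.1, fun x' hx' => ?_⟩
    have := huniq (some x' 0 (hns hx')) ((addOrderOf_eq_two_iff_s2 h2 h₁ h₃ _).mpr ⟨x', _, rfl⟩)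
    exact (some.inj this).1
  · rintro ⟨x, hx, huniq⟩
    refine ⟨some x 0 (hns hx), (addOrderOf_eq_two_iff_s2 h2 h₁ h₃ _).mpr ⟨x, _, rfl⟩, ?_⟩
    intro P hP
    obtain ⟨x', h', rfl⟩ := (addOrderOf_eq_two_iff_s2 h2 h₁ h₃ _).mp hP
    obtain rfl := huniq x' h'.1
    rfl

lemma three_nsmul_some_zero_eq_zero_iff {c : F} (hc : c ≠ 0) (h : W.toAffine.Nonsingular 0 c) :
    3 • some 0 c h = 0 ↔ W.a₄ ^ 2 = 4 * c ^ 2 * W.a₂ := by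
  have hy : c ≠ W.toAffine.negY 0 c := fun hy => hc ((negY_eq_self_iff h2 h₁ h₃ 0 c).mp hy.symm)
  have h2c : 2 * c ≠ 0 := mul_ne_zero h2 hc
  have hslope : W.toAffine.slope 0 0 c c = W.a₄ / (2 * c) := by
    rw [slope_of_Y_ne rfl hy, negY, h₁, h₃]
    congr 1 <;> ring
  have hflex : (W.a₄ / (2 * c)) ^ 2 - W.a₂ = 0 ↔ W.a₄ ^ 2 = 4 * c ^ 2 * W.a₂ := by
    rw [sub_eq_zero, div_pow, div_eq_iff (pow_ne_zero 2 h2c)]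
    constructor <;> intro h <;> linear_combination h
  rw [succ_nsmul, two_nsmul, add_eq_zero_iff_eq_neg, neg_some, add_self_of_Y_ne hy, some.injEq,
    hslope, ← hflex]
  simp only [addY, negAddY, addX, negY, h₁, h₃, zero_mul, add_zero, sub_zero]
  constructor
  · exact And.left
  · intro h
    refine ⟨h, ?_⟩
    rw [h]
    ring

end Point

end WeierstrassCurve.Affine

namespace WeierstrassCurve

open WeierstrassCurve.Affine WeierstrassCurve.Affine.Point VariableChange

variable {F : Type*} [Field F]

/-- The tangent `y = m x + c` at `(0, c)` meets `y² = x³ + (m x + c)²` only there. -/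
def flexCurve (m c : F) : WeierstrassCurve F := ⟨0, m ^ 2, 0, 2 * m * c, c ^ 2⟩

lemma flexCurve_add_one_self (t : F) :
    flexCurve (t + 1) t = ⟨0, (t ^ 2 + 2 * t) + 1, 0, (t ^ 2 + 2 * t) + t ^ 2, t ^ 2⟩ := by
  rw [flexCurve]
  congr 1 <;> ring

lemma flexCurve_Δ (m c : F) : (flexCurve m c).Δ = 16 * c ^ 3 * (4 * m ^ 3 - 27 * c) := by
  simp only [flexCurve, Δ, b₂, b₄, b₆, b₈]
  ring

lemma equation_flexCurve_iff (m c x y : F) :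
    (flexCurve m c).toAffine.Equation x y ↔ y ^ 2 = x ^ 3 + (m * x + c) ^ 2 := by
  rw [equation_iff]
  simp only [flexCurve]
  constructor <;> intro h <;> linear_combination h

lemma smul_flexCurve (u : Fˣ) (m c : F) :
    (⟨u, 0, 0, 0⟩ : VariableChange F) • flexCurve m c = flexCurve (m / u) (c / u ^ 3) := by
  have hu : (u : F) ≠ 0 := u.ne_zero
  ext <;> simp only [flexCurve, variableChange_a₁, variableChange_a₂, variableChange_a₃,
    variableChange_a₄, variableChange_a₆, Units.val_inv_eq_inv_val] <;> field_simp <;> ring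

lemma exists_smul_flexCurve_eq {m c e : F} (hc : c ≠ 0)
    (he : (flexCurve m c).toAffine.Equation e 0) :
    ∃ u : Fˣ, (⟨u, 0, 0, 0⟩ : VariableChange F) • flexCurve m c =
      flexCurve (c / u ^ 3 + 1) (c / u ^ 3) := by
  rw [equation_flexCurve_iff] at he
  have he0 : e ≠ 0 := by
    rintro rfl
    exact hc (pow_eq_zero_iff two_ne_zero |>.mp (by linear_combination -he))
  obtain ⟨u, hue⟩ : ∃ u, u * e = m * e + c := ⟨(m * e + c) / e, div_mul_cancel₀ _ he0⟩
  have hu2 : u ^ 2 = -e := by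
    have : e ^ 2 * (u ^ 2 + e) = 0 := by linear_combination -he + (u * e + m * e + c) * hue
    linear_combination (mul_eq_zero.mp this).resolve_left (pow_ne_zero 2 he0)
  have hu : u ≠ 0 := by
    rintro rfl
    exact he0 (by linear_combination hu2)
  refine ⟨Units.mk0 u hu, ?_⟩
  rw [smul_flexCurve, Units.val_mk0]
  congr 1
  rw [div_add_one (pow_ne_zero 3 hu), div_eq_div_iff hu (pow_ne_zero 3 hu)]
  linear_combination (m * u - u ^ 2) * hu2 + u * hue

lemma flexCurve_add_one_Δ_ne_zero_iff (h2 : (2 : F) ≠ 0) (t : F) :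
    (flexCurve (t + 1) t).Δ ≠ 0 ↔ t ≠ 0 ∧ t ≠ -4 ∧ t ≠ 1 / 2 := by
  have hΔ : (flexCurve (t + 1) t).Δ = 2 ^ 4 * t ^ 3 * (t + 4) * (2 * t - 1) ^ 2 := by
    rw [flexCurve_Δ]
    ring
  have h4 : t + 4 = 0 ↔ t = -4 := add_eq_zero_iff_eq_neg
  have h12 : 2 * t - 1 = 0 ↔ t = 1 / 2 := by rw [eq_div_iff h2, sub_eq_zero, mul_comm]
  simp [hΔ, h2, h4, h12, and_assoc]

lemma equation_flexCurve_add_one_iff (t x : F) : (flexCurve (t + 1) t).toAffine.Equation x 0 ↔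
    (x + 1) * (x ^ 2 + (t ^ 2 + 2 * t) * x + t ^ 2) = 0 := by
  rw [equation_flexCurve_iff]
  constructor <;> intro h <;> linear_combination -h

lemma existsUnique_equation_flexCurve_add_one_iff (h2 : (2 : F) ≠ 0) {t : F} (ht0 : t ≠ 0)
    (ht : t ≠ 1 / 2) :
    (∃! x, (flexCurve (t + 1) t).toAffine.Equation x 0) ↔ ¬IsSquare (t ^ 2 + 4 * t) := by
  simp only [equation_flexCurve_add_one_iff]
  constructor
  · rintro ⟨x, -, huniq⟩ ⟨d, hd⟩
    have hroot := huniq ((t * d - t ^ 2 - 2 * t) / 2) (by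
      refine mul_eq_zero_of_right _ ?_
      field_simp
      linear_combination (-t ^ 2) * hd)
    have htd : t * d = t ^ 2 + 2 * t - 2 := by
      rw [← huniq (-1) (by ring), div_eq_iff h2] at hroot
      linear_combination hroot
    refine ht ((eq_div_iff h2).mpr ?_)
    have h4 : (2 : F) * 2 ≠ 0 := mul_ne_zero h2 h2
    refine mul_left_cancel₀ h4 ?_
    linear_combination t ^ 2 * hd + (t * d + t ^ 2 + 2 * t - 2) * htd
  · intro hsq
    refine ⟨-1, by ring, fun x hx => ?_⟩
    rcases mul_eq_zero.mp hx with h | h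
    · linear_combination h
    · refine absurd ⟨(2 * x + t ^ 2 + 2 * t) / t, ?_⟩ hsq
      field_simp
      linear_combination (-4) * h

variable [DecidableEq F]

lemma exists_addOrderOf_eq_six_flexCurve (h2 : (2 : F) ≠ 0) {m c e : F} (hc : c ≠ 0)
    (hΔ : (flexCurve m c).Δ ≠ 0) (he : (flexCurve m c).toAffine.Equation e 0) :
    ∃ P : (flexCurve m c).toAffine.Point, addOrderOf P = 6 := by
  have hQ : (flexCurve m c).toAffine.Nonsingular 0 c :=
    (equation_iff_nonsingular_of_Δ_ne_zero hΔ).mp ((equation_flexCurve_iff ..).mpr (by ring))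
  have hR := (equation_iff_nonsingular_of_Δ_ne_zero hΔ).mp he
  have : Fact (Nat.Prime 3) := ⟨Nat.prime_three⟩
  have hQ3 : addOrderOf (some 0 c hQ) = 3 := addOrderOf_eq_prime_iff.mpr
    ⟨(three_nsmul_some_zero_eq_zero_iff h2 rfl rfl hc hQ).mpr (by simp only [flexCurve]; ring),
      some_ne_zero _⟩
  have hR2 : addOrderOf (some e 0 hR) = 2 := (addOrderOf_eq_two_iff_s2 h2 rfl rfl _).mpr ⟨e, hR, rfl⟩
  refine ⟨some 0 c hQ + some e 0 hR, ?_⟩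
  rw [(AddCommute.all _ _).addOrderOf_add_eq_mul_addOrderOf_of_coprime
    (by rw [hQ3, hR2]; decide), hQ3, hR2]

variable {W : WeierstrassCurve F} (h2 : (2 : F) ≠ 0) (h₁ : W.a₁ = 0) (h₃ : W.a₃ = 0)
include h2 h₁ h₃

lemma exists_eq_flexCurve_of_three_nsmul_eq_zero {c : F} (hc : c ≠ 0)
    (h : W.toAffine.Nonsingular 0 c) (h3 : 3 • some 0 c h = 0) : ∃ m, W = flexCurve m c := by
  have hflex := (three_nsmul_some_zero_eq_zero_iff h2 h₁ h₃ hc h).mp h3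
  have ha₆ := h.1
  rw [equation_iff, h₁, h₃] at ha₆
  have h2c : 2 * c ≠ 0 := mul_ne_zero h2 hc
  refine ⟨W.a₄ / (2 * c), ?_⟩
  ext
  · exact h₁
  · simp only [flexCurve]
    field_simp
    linear_combination -hflex
  · exact h₃
  · simp only [flexCurve]
    field_simp
  · simp only [flexCurve]
    linear_combination -ha₆

lemma exists_eq_flexCurve_of_two_nsmul_eq {P : W.toAffine.Point} (hP : addOrderOf P = 6) {c : F}
    {h : W.toAffine.Nonsingular 0 c} (h2P : 2 • P = some 0 c h) :
    ∃ m e, W = flexCurve m c ∧ c ≠ 0 ∧ (flexCurve m c).toAffine.Equation e 0 := by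
  have hQ3 : addOrderOf (some 0 c h) = 3 := by
    rw [← h2P, addOrderOf_nsmul_of_dvd two_ne_zero (by rw [hP]; norm_num), hP]
  have hc : c ≠ 0 := by
    rintro rfl
    have := (addOrderOf_eq_two_iff_s2 h2 h₁ h₃ _).mpr ⟨0, h, rfl⟩
    rw [hQ3] at this
    norm_num at this
  obtain ⟨m, hm⟩ := exists_eq_flexCurve_of_three_nsmul_eq_zero h2 h₁ h₃ hc h
    (by rw [← hQ3]; exact addOrderOf_nsmul_eq_zero _)
  have hR2 : addOrderOf (3 • P) = 2 := by
    rw [addOrderOf_nsmul_of_dvd three_ne_zero (by rw [hP]; norm_num), hP]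
  obtain ⟨e, he, -⟩ := (addOrderOf_eq_two_iff_s2 h2 h₁ h₃ _).mp hR2
  exact ⟨m, e, hm, hc, hm ▸ he.1⟩

lemma exists_variableChange_eq_flexCurve {P : W.toAffine.Point} (hP : addOrderOf P = 6) :
    ∃ (C : VariableChange F) (t : F), C • W = flexCurve (t + 1) t := by
  obtain ⟨x₀, y₀, hQ, hPQ⟩ : ∃ x₀ y₀ h, 2 • P = some x₀ y₀ h := by
    rcases h : 2 • P with _ | ⟨x₀, y₀, hQ⟩
    · have := addOrderOf_nsmul_of_dvd (x := P) two_ne_zero (by rw [hP]; norm_num)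
      rw [h, ← zero_def, addOrderOf_zero, hP] at this
      norm_num at this
    · exact ⟨x₀, y₀, hQ, rfl⟩
  set C₁ : VariableChange F := ⟨1, x₀, 0, 0⟩
  set φ := Point.variableChangeEquiv W C₁
  have hC₁ : C₁.mapX 0 = x₀ ∧ C₁.mapY 0 y₀ = y₀ := by simp [C₁, mapX, mapY]
  have h₀ : (C₁ • W).toAffine.Nonsingular 0 y₀ :=
    (nonsingular_variableChange_iff 0 y₀).mp (by rwa [hC₁.1, hC₁.2])
  have h2P₁ : 2 • φ.symm P = some 0 y₀ h₀ := φ.injective <| by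
    rw [map_nsmul, AddEquiv.apply_symm_apply, hPQ, variableChangeEquiv_some]
    simp only [hC₁]
  obtain ⟨m, e, hm, hy₀, he⟩ := exists_eq_flexCurve_of_two_nsmul_eq h2
    (by simp [C₁, variableChange_a₁, h₁]) (by simp [C₁, variableChange_a₃, h₁, h₃])
    ((AddEquiv.addOrderOf_eq φ.symm P).trans hP) h2P₁
  obtain ⟨u, hu⟩ := exists_smul_flexCurve_eq hy₀ he
  exact ⟨⟨u, 0, 0, 0⟩ * C₁, y₀ / u ^ 3, by rw [mul_smul, hm, hu]⟩

end WeierstrassCurve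

open WeierstrassCurve WeierstrassCurve.Affine.Point

open Classical in
/-- versal family of elliptic curves with a point of order 6 and exactly one
point of order 2, over a field of characteristic ≠ 2.  The curve
`E⁽⁶⁾_t : y² = (x² + (t² + 2t)x + t²)(x + 1)` has expanded Weierstrass form
`y² = x³ + (t² + 2t + 1)x² + (2t² + 2t)x + t²`. -/
theorem order_six_versal_family {K : Type*} [Field K] (h2 : (2 : K) ≠ 0)
    (E : WeierstrassCurve K) (hE₁ : E.a₁ = 0) (hE₃ : E.a₃ = 0) (hΔ : E.Δ ≠ 0) :
    ((∃! P : E.toAffine.Point, addOrderOf P = 2) ∧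
      ∃ P : E.toAffine.Point, addOrderOf P = 6) ↔
    ∃ t : K, t ≠ 0 ∧ t ≠ -4 ∧ t ≠ 1 / 2 ∧ ¬ IsSquare (t ^ 2 + 4 * t) ∧
      ∃ C : VariableChange K,
        C • E =
          ⟨0, (t ^ 2 + 2 * t) + 1, 0, (t ^ 2 + 2 * t) + t ^ 2, t ^ 2⟩ := by
  simp only [← flexCurve_add_one_self]
  constructor
  · rintro ⟨huniq, P, hP⟩
    obtain ⟨C, t, hC⟩ := exists_variableChange_eq_flexCurve h2 hE₁ hE₃ hP
    have hΔt : (flexCurve (t + 1) t).Δ ≠ 0 := by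
      rw [← hC, variableChange_Δ]
      exact mul_ne_zero (by simp) hΔ
    obtain ⟨ht0, ht4, ht⟩ := (flexCurve_add_one_Δ_ne_zero_iff h2 t).mp hΔt
    refine ⟨t, ht0, ht4, ht, ?_, C, hC⟩
    rwa [← existsUnique_equation_flexCurve_add_one_iff h2 ht0 ht,
      ← existsUnique_addOrderOf_eq_two_iff_s2 h2 rfl rfl hΔt, ← hC,
      existsUnique_addOrderOf_variableChange_iff]
  · rintro ⟨t, ht0, ht4, ht, hsq, C, hC⟩
    have hΔt := (flexCurve_add_one_Δ_ne_zero_iff h2 t).mpr ⟨ht0, ht4, ht⟩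
    rw [← existsUnique_addOrderOf_variableChange_iff E C,
      ← exists_addOrderOf_variableChange_iff E C, hC,
      existsUnique_addOrderOf_eq_two_iff_s2 h2 rfl rfl hΔt,
      existsUnique_equation_flexCurve_add_one_iff h2 ht0 ht]
    exact ⟨hsq, exists_addOrderOf_eq_six_flexCurve h2 ht0 hΔt
      ((equation_flexCurve_add_one_iff t (-1)).mpr (by ring))⟩
end

section
/- Let K be a field of characteristic different from 2 with algebraic closure K̄, let f ∈ K[x] be a monic cubic without repeated roots whose roots in K̄ are α₁, α₂, α₃, let E : y² = f(x) be the associated elliptic curve over K, and let P = (x₀, y₀) ∈ E(K). (a) If r₁, r₂, r₃ ∈ K̄ satisfy rᵢ² = x₀ − αᵢ for i = 1, 2, 3, r₁r₂r₃ = −y₀, and both s₁ := r₁ + r₂ + r₃ and s₂ := r₁r₂ + r₂r₃ + r₃r₁ lie in K, then the point Q := (x₀ + s₂, −y₀ − s₁s₂) lies in E(K) and satisfies 2Q = P. (b) Conversely, if Q ∈ E(K) satisfies 2Q = P, then there exists exactly one triple (r₁, r₂, r₃) of elements of K̄ with rᵢ² = x₀ − αᵢ, r₁r₂r₃ = −y₀,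 s₁ ∈ K, s₂ ∈ K, and Q = (x₀ + s₂, −y₀ − s₁s₂). -/
/-!
Let `rᵢ` be square roots of `x₀ - αᵢ` with `r₁ r₂ r₃ = -y₀`, with elementary symmetric functions
`e₁, e₂`, and put `x = x₀ + e₂`, `y = -y₀ - e₁ e₂`. Then `x - αᵢ = rᵢ² + e₂ = (rᵢ + rⱼ)(rᵢ + rₖ)`
and `y = -(r₁ + r₂)(r₁ + r₃)(r₂ + r₃)`, so `y² = ∏ (x - αᵢ)`, the tangent at `(x, y)` has slope
`-e₁`, and the doubling formulas return `(x₀, y₀)`. Conversely, for a half `(x, y)` of `P` these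
identities force the pairwise sums `rⱼ + rₖ = -y / (x - αᵢ)`; this pins the triple down, and in
characteristic `≠ 2` the triple with these pairwise sums exists. Everything is computed over `K̄`,
where the curve is `y² = (x - α₁)(x - α₂)(x - α₃)`, and pulled back along the injection `K → K̄`.
-/

namespace WeierstrassCurve

variable {F : Type*} [Field F]

def ofRoots (α₁ α₂ α₃ : F) : WeierstrassCurve F :=
  ⟨0, -(α₁ + α₂ + α₃), 0, α₁ * α₂ + α₁ * α₃ + α₂ * α₃, -(α₁ * α₂ * α₃)⟩

lemma ofRoots_equation_iff {α₁ α₂ α₃ x y : F} :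
    (ofRoots α₁ α₂ α₃).toAffine.Equation x y ↔ y ^ 2 = (x - α₁) * (x - α₂) * (x - α₃) := by
  rw [Affine.equation_iff]
  simp only [ofRoots]
  constructor <;> intro h <;> linear_combination h

lemma ofRoots_negY (α₁ α₂ α₃ x y : F) : (ofRoots α₁ α₂ α₃).toAffine.negY x y = -y := by
  simp [Affine.negY, ofRoots]

lemma ofRoots_Y_ne_negY {α₁ α₂ α₃ x y : F} (h2 : (2 : F) ≠ 0) (hy : y ≠ 0) :
    y ≠ (ofRoots α₁ α₂ α₃).toAffine.negY x y := by
  rw [ofRoots_negY]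
  exact fun h => hy ((mul_eq_zero.mp (by linear_combination h : 2 * y = 0)).resolve_left h2)

namespace Affine.Point

variable [DecidableEq F] {W : Affine F} {x₀ y₀ x₁ y₁ : F}

lemma two_nsmul_some_eq_some_iff (h₁ : W.Nonsingular x₁ y₁) (h₀ : W.Nonsingular x₀ y₀) :
    2 • some _ _ h₁ = some _ _ h₀ ↔ y₁ ≠ W.negY x₁ y₁ ∧
      x₀ = W.addX x₁ x₁ (W.slope x₁ x₁ y₁ y₁) ∧ y₀ = W.addY x₁ x₁ y₁ (W.slope x₁ x₁ y₁ y₁) := by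
  rw [two_nsmul]
  by_cases hy : y₁ = W.negY x₁ y₁
  · rw [add_self_of_Y_eq hy]
    exact iff_of_false (some_ne_zero h₀).symm fun h => h.1 hy
  · rw [add_self_of_Y_ne hy, some.injEq]
    exact ⟨fun h => ⟨hy, h.1.symm, h.2.symm⟩, fun h => ⟨h.2.1.symm, h.2.2.symm⟩⟩

lemma two_nsmul_some_eq_some_iff_of_map {K : Type*} [Field K] [DecidableEq K] (f : F →+* K)
    {W' : Affine K} (hW : W.map f = W') (h₁ : W.Nonsingular x₁ y₁) (h₀ : W.Nonsingular x₀ y₀)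
    (h₁' : W'.Nonsingular (f x₁) (f y₁)) (h₀' : W'.Nonsingular (f x₀) (f y₀)) :
    2 • some _ _ h₁ = some _ _ h₀ ↔ 2 • some _ _ h₁' = some _ _ h₀' := by
  subst hW
  simp only [two_nsmul_some_eq_some_iff, map_negY, map_slope, map_addX, map_addY,
    f.injective.ne_iff, f.injective.eq_iff]

end Affine.Point

/-- Solved for `αᵢ` and `y`, so that destructuring with `rfl` turns claims into ring identities. -/
structure IsHalfTriple (α₁ α₂ α₃ x y r₁ r₂ r₃ : F) : Prop where
  α₁_eq : α₁ = x - (r₁ + r₂) * (r₁ + r₃)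
  α₂_eq : α₂ = x - (r₁ + r₂) * (r₂ + r₃)
  α₃_eq : α₃ = x - (r₁ + r₃) * (r₂ + r₃)
  y_eq : y = -((r₁ + r₂) * (r₁ + r₃) * (r₂ + r₃))

lemma isHalfTriple_iff_sq_eq {α₁ α₂ α₃ x₀ y₀ r₁ r₂ r₃ : F} :
    IsHalfTriple α₁ α₂ α₃ (x₀ + (r₁ * r₂ + r₂ * r₃ + r₃ * r₁))
        (-y₀ - (r₁ + r₂ + r₃) * (r₁ * r₂ + r₂ * r₃ + r₃ * r₁)) r₁ r₂ r₃ ↔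
      r₁ ^ 2 = x₀ - α₁ ∧ r₂ ^ 2 = x₀ - α₂ ∧ r₃ ^ 2 = x₀ - α₃ ∧ r₁ * r₂ * r₃ = -y₀ := by
  constructor
  · rintro ⟨rfl, rfl, rfl, hy⟩
    exact ⟨by ring, by ring, by ring, by linear_combination -hy⟩
  · rintro ⟨h₁, h₂, h₃, hy⟩
    exact ⟨by linear_combination h₁, by linear_combination h₂, by linear_combination h₃,
      by linear_combination -hy⟩

lemma exists_isHalfTriple {α₁ α₂ α₃ x y : F} (h2 : (2 : F) ≠ 0) (hy : y ≠ 0)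
    (h : (ofRoots α₁ α₂ α₃).toAffine.Equation x y) :
    ∃ r₁ r₂ r₃, IsHalfTriple α₁ α₂ α₃ x y r₁ r₂ r₃ := by
  obtain ⟨a, rfl⟩ : ∃ a, α₁ = x - a := ⟨x - α₁, by ring⟩
  obtain ⟨b, rfl⟩ : ∃ b, α₂ = x - b := ⟨x - α₂, by ring⟩
  obtain ⟨c, rfl⟩ : ∃ c, α₃ = x - c := ⟨x - α₃, by ring⟩
  rw [ofRoots_equation_iff, sub_sub_cancel, sub_sub_cancel, sub_sub_cancel] at h
  -- the pairwise sums of this triple are `-b c / y = -y / a`, `-a c / y` and `-a b / y`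
  refine ⟨-(a * b + a * c - b * c) / (2 * y), -(a * b + b * c - a * c) / (2 * y),
    -(a * c + b * c - a * b) / (2 * y), ⟨?_, ?_, ?_, ?_⟩⟩ <;> field_simp
  · linear_combination (-4 * a) * h
  · linear_combination (-4 * b) * h
  · linear_combination (-4 * c) * h
  · linear_combination 8 * (y ^ 2 + a * b * c) * h

namespace IsHalfTriple

variable {α₁ α₂ α₃ x y r₁ r₂ r₃ : F}

lemma equation (h : IsHalfTriple α₁ α₂ α₃ x y r₁ r₂ r₃) :
    (ofRoots α₁ α₂ α₃).toAffine.Equation x y := by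
  obtain ⟨rfl, rfl, rfl, rfl⟩ := h
  rw [ofRoots_equation_iff]
  ring

lemma y_ne_zero (h : IsHalfTriple α₁ α₂ α₃ x y r₁ r₂ r₃) (h₁₂ : α₁ ≠ α₂) (h₁₃ : α₁ ≠ α₃)
    (h₂₃ : α₂ ≠ α₃) : y ≠ 0 := by
  obtain ⟨rfl, rfl, rfl, rfl⟩ := h
  rw [neg_ne_zero]
  refine mul_ne_zero (mul_ne_zero ?_ ?_) ?_ <;> intro hr
  · exact h₁₂ (by linear_combination (r₂ - r₁) * hr)
  · exact h₁₃ (by linear_combination (r₃ - r₁) * hr)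
  · exact h₂₃ (by linear_combination (r₃ - r₂) * hr)

lemma nonsingular (h : IsHalfTriple α₁ α₂ α₃ x y r₁ r₂ r₃) (h2 : (2 : F) ≠ 0) (hy : y ≠ 0) :
    (ofRoots α₁ α₂ α₃).toAffine.Nonsingular x y :=
  (Affine.nonsingular_iff x y).mpr ⟨h.equation, Or.inr (ofRoots_Y_ne_negY h2 hy)⟩

lemma eq_of_isHalfTriple (h : IsHalfTriple α₁ α₂ α₃ x y r₁ r₂ r₃) (h2 : (2 : F) ≠ 0) (hy : y ≠ 0)
    {t₁ t₂ t₃ : F} (h' : IsHalfTriple α₁ α₂ α₃ x y t₁ t₂ t₃) : r₁ = t₁ ∧ r₂ = t₂ ∧ r₃ = t₃ := by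
  have e₁ : (r₁ + r₂) * (r₁ + r₃) = (t₁ + t₂) * (t₁ + t₃) := by
    linear_combination h.α₁_eq - h'.α₁_eq
  have e₂ : (r₁ + r₂) * (r₂ + r₃) = (t₁ + t₂) * (t₂ + t₃) := by
    linear_combination h.α₂_eq - h'.α₂_eq
  have e₃ : (r₁ + r₃) * (r₂ + r₃) = (t₁ + t₃) * (t₂ + t₃) := by
    linear_combination h.α₃_eq - h'.α₃_eq
  have e : (r₁ + r₂) * (r₁ + r₃) * (r₂ + r₃) = (t₁ + t₂) * (t₁ + t₃) * (t₂ + t₃) := by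
    linear_combination h.y_eq - h'.y_eq
  have hne : (r₁ + r₂) * (r₁ + r₃) * (r₂ + r₃) ≠ 0 := by
    rwa [h.y_eq, neg_ne_zero] at hy
  simp only [mul_ne_zero_iff] at hne
  obtain ⟨⟨h₁₂, h₁₃⟩, h₂₃⟩ := hne
  have s₂₃ : r₂ + r₃ = t₂ + t₃ :=
    mul_left_cancel₀ (mul_ne_zero h₁₂ h₁₃) (by linear_combination e - (t₂ + t₃) * e₁)
  have s₁₃ : r₁ + r₃ = t₁ + t₃ :=
    mul_left_cancel₀ (mul_ne_zero h₁₂ h₂₃) (by linear_combination e - (t₁ + t₃) * e₂)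
  have s₁₂ : r₁ + r₂ = t₁ + t₂ :=
    mul_left_cancel₀ (mul_ne_zero h₁₃ h₂₃) (by linear_combination e - (t₁ + t₂) * e₃)
  refine ⟨mul_left_cancel₀ h2 ?_, mul_left_cancel₀ h2 ?_, mul_left_cancel₀ h2 ?_⟩
  · linear_combination s₁₂ + s₁₃ - s₂₃
  · linear_combination s₁₂ + s₂₃ - s₁₃
  · linear_combination s₁₃ + s₂₃ - s₁₂

lemma slope_eq [DecidableEq F] (h : IsHalfTriple α₁ α₂ α₃ x y r₁ r₂ r₃) (h2 : (2 : F) ≠ 0)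
    (hy : y ≠ 0) : (ofRoots α₁ α₂ α₃).toAffine.slope x x y y = -(r₁ + r₂ + r₃) := by
  have hy' : y ≠ (ofRoots α₁ α₂ α₃).toAffine.negY x y := ofRoots_Y_ne_negY h2 hy
  rw [Affine.slope_of_Y_ne rfl hy', div_eq_iff (sub_ne_zero.mpr hy'), ofRoots_negY]
  obtain ⟨rfl, rfl, rfl, rfl⟩ := h
  simp only [ofRoots]
  ring

lemma two_nsmul_some_eq_some_iff [DecidableEq F] (h : IsHalfTriple α₁ α₂ α₃ x y r₁ r₂ r₃)
    (h2 : (2 : F) ≠ 0) (hy : y ≠ 0) (hQ : (ofRoots α₁ α₂ α₃).toAffine.Nonsingular x y) {x₀ y₀ : F}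
    (hP : (ofRoots α₁ α₂ α₃).toAffine.Nonsingular x₀ y₀) :
    2 • Affine.Point.some _ _ hQ = Affine.Point.some _ _ hP ↔
      x = x₀ + (r₁ * r₂ + r₂ * r₃ + r₃ * r₁) ∧
        y = -y₀ - (r₁ + r₂ + r₃) * (r₁ * r₂ + r₂ * r₃ + r₃ * r₁) := by
  rw [Affine.Point.two_nsmul_some_eq_some_iff, h.slope_eq h2 hy]
  have hX : (ofRoots α₁ α₂ α₃).toAffine.addX x x (-(r₁ + r₂ + r₃)) =
      x - (r₁ * r₂ + r₂ * r₃ + r₃ * r₁) := by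
    obtain ⟨rfl, rfl, rfl, rfl⟩ := h
    simp only [Affine.addX, ofRoots]
    ring
  have hY : (ofRoots α₁ α₂ α₃).toAffine.addY x x y (-(r₁ + r₂ + r₃)) =
      -y - (r₁ + r₂ + r₃) * (r₁ * r₂ + r₂ * r₃ + r₃ * r₁) := by
    rw [Affine.addY, Affine.negAddY, hX, ofRoots_negY]
    ring
  rw [hX, hY, and_iff_right (ofRoots_Y_ne_negY h2 hy)]
  constructor <;> rintro ⟨hx, hy⟩ <;> exact ⟨by linear_combination -hx, by linear_combination hy⟩

end IsHalfTriple

section BaseChange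

variable {K L : Type*} [Field K] [Field L] [DecidableEq K] [DecidableEq L] (f : K →+* L)
  {W : Affine K} {α₁ α₂ α₃ : L}

lemma two_nsmul_some_eq_some_iff_of_isHalfTriple (hW : W.map f = ofRoots α₁ α₂ α₃)
    (h2 : (2 : L) ≠ 0) {x y x₀ y₀ : K} (hQ : W.Nonsingular x y)
    (hP : W.Nonsingular x₀ y₀) {r₁ r₂ r₃ : L}
    (h : IsHalfTriple α₁ α₂ α₃ (f x) (f y) r₁ r₂ r₃) (hy : f y ≠ 0) :
    2 • Affine.Point.some _ _ hQ = Affine.Point.some _ _ hP ↔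
      f x = f x₀ + (r₁ * r₂ + r₂ * r₃ + r₃ * r₁) ∧
        f y = -f y₀ - (r₁ + r₂ + r₃) * (r₁ * r₂ + r₂ * r₃ + r₃ * r₁) := by
  have hP' : (ofRoots α₁ α₂ α₃).toAffine.Nonsingular (f x₀) (f y₀) :=
    hW ▸ (W.map_nonsingular f.injective _ _).mpr hP
  rw [Affine.Point.two_nsmul_some_eq_some_iff_of_map f hW hQ hP (h.nonsingular h2 hy) hP',
    h.two_nsmul_some_eq_some_iff h2 hy]

theorem exists_two_nsmul_eq_of_sq_eq (hW : W.map f = ofRoots α₁ α₂ α₃) (h2 : (2 : L) ≠ 0)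
    (h₁₂ : α₁ ≠ α₂) (h₁₃ : α₁ ≠ α₃) (h₂₃ : α₂ ≠ α₃) {x₀ y₀ s₁ s₂ : K}
    (hP : W.Nonsingular x₀ y₀) {r₁ r₂ r₃ : L} (hr₁ : r₁ ^ 2 = f x₀ - α₁)
    (hr₂ : r₂ ^ 2 = f x₀ - α₂) (hr₃ : r₃ ^ 2 = f x₀ - α₃) (hr : r₁ * r₂ * r₃ = -f y₀)
    (hs₁ : f s₁ = r₁ + r₂ + r₃) (hs₂ : f s₂ = r₁ * r₂ + r₂ * r₃ + r₃ * r₁) :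
    ∃ hQ : W.Nonsingular (x₀ + s₂) (-y₀ - s₁ * s₂),
      2 • Affine.Point.some _ _ hQ = Affine.Point.some _ _ hP := by
  have h : IsHalfTriple α₁ α₂ α₃ (f (x₀ + s₂)) (f (-y₀ - s₁ * s₂)) r₁ r₂ r₃ := by
    rw [map_add, map_sub, map_neg, map_mul, hs₁, hs₂]
    exact isHalfTriple_iff_sq_eq.mpr ⟨hr₁, hr₂, hr₃, hr⟩
  have hy := h.y_ne_zero h₁₂ h₁₃ h₂₃
  have hQ : W.Nonsingular (x₀ + s₂) (-y₀ - s₁ * s₂) :=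
    (W.map_nonsingular f.injective _ _).mp (hW ▸ h.nonsingular h2 hy)
  refine ⟨hQ, (two_nsmul_some_eq_some_iff_of_isHalfTriple f hW h2 hQ hP h hy).mpr ⟨?_, ?_⟩⟩ <;>
    simp only [map_add, map_sub, map_neg, map_mul, hs₁, hs₂]

theorem existsUnique_sq_eq_of_two_nsmul_eq (hW : W.map f = ofRoots α₁ α₂ α₃) (h2 : (2 : L) ≠ 0)
    {x₀ y₀ : K} (hP : W.Nonsingular x₀ y₀) (Q : W.Point)
    (hQP : 2 • Q = Affine.Point.some _ _ hP) :
    ∃! r : L × L × L,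
      r.1 ^ 2 = f x₀ - α₁ ∧ r.2.1 ^ 2 = f x₀ - α₂ ∧ r.2.2 ^ 2 = f x₀ - α₃ ∧
        r.1 * r.2.1 * r.2.2 = -f y₀ ∧
        ∃ s₁ s₂ : K, f s₁ = r.1 + r.2.1 + r.2.2 ∧ f s₂ = r.1 * r.2.1 + r.2.1 * r.2.2 + r.2.2 * r.1 ∧
          ∃ hQ : W.Nonsingular (x₀ + s₂) (-y₀ - s₁ * s₂), Q = Affine.Point.some _ _ hQ := by
  rcases Q with _ | ⟨x, y, hQ⟩
  · rw [← Affine.Point.zero_def, smul_zero] at hQP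
    exact absurd hQP.symm (Affine.Point.some_ne_zero hP)
  have hy : f y ≠ 0 := by
    have hy := ((Affine.Point.two_nsmul_some_eq_some_iff hQ hP).mp hQP).1
    rw [← f.injective.ne_iff, ← Affine.map_negY, hW, ofRoots_negY] at hy
    exact fun h0 => hy (by rw [h0, neg_zero])
  obtain ⟨r₁, r₂, r₃, h⟩ := exists_isHalfTriple h2 hy
    (hW ▸ (W.map_equation f.injective _ _).mpr hQ.1)
  obtain ⟨hx, hy'⟩ := (two_nsmul_some_eq_some_iff_of_isHalfTriple f hW h2 hQ hP h hy).mp hQP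
  obtain ⟨s₁, hs₁⟩ : ∃ s₁ : K, f s₁ = r₁ + r₂ + r₃ :=
    ⟨-W.slope x x y y, by rw [map_neg, ← Affine.map_slope, hW, h.slope_eq h2 hy, neg_neg]⟩
  obtain ⟨s₂, hs₂⟩ : ∃ s₂ : K, f s₂ = r₁ * r₂ + r₂ * r₃ + r₃ * r₁ :=
    ⟨x - x₀, by rw [map_sub, hx]; ring⟩
  obtain rfl : x = x₀ + s₂ := f.injective (by rw [map_add, hs₂, hx])
  obtain rfl : y = -y₀ - s₁ * s₂ := f.injective (by rw [map_sub, map_neg, map_mul, hs₁, hs₂, hy'])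
  have hT := h
  rw [map_add, map_sub, map_neg, map_mul, hs₁, hs₂] at hT
  obtain ⟨hr₁, hr₂, hr₃, hr⟩ := isHalfTriple_iff_sq_eq.mp hT
  refine ⟨(r₁, r₂, r₃), ⟨hr₁, hr₂, hr₃, hr, s₁, s₂, hs₁, hs₂, hQ, rfl⟩, ?_⟩
  rintro ⟨t₁, t₂, t₃⟩ ⟨ht₁, ht₂, ht₃, ht, u₁, u₂, hu₁, hu₂, _, hQu⟩
  obtain ⟨hxu, hyu⟩ := Affine.Point.some.inj hQu
  have h' : IsHalfTriple α₁ α₂ α₃ (f (x₀ + s₂)) (f (-y₀ - s₁ * s₂)) t₁ t₂ t₃ := by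
    rw [hxu, hyu, map_add, map_sub, map_neg, map_mul, hu₁, hu₂]
    exact isHalfTriple_iff_sq_eq.mpr ⟨ht₁, ht₂, ht₃, ht⟩
  obtain ⟨rfl, rfl, rfl⟩ := h'.eq_of_isHalfTriple h2 hy h
  rfl

end BaseChange

lemma map_eq_ofRoots {K L : Type*} [Field K] [Field L] (f : K →+* L) (h2 : (2 : L) ≠ 0)
    {A B C : K} {α₁ α₂ α₃ : L}
    (hf : ∀ z, z ^ 3 + f A * z ^ 2 + f B * z + f C = (z - α₁) * (z - α₂) * (z - α₃)) :
    (⟨0, A, 0, B, C⟩ : WeierstrassCurve K).map f = ofRoots α₁ α₂ α₃ := by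
  have hA : f A = -(α₁ + α₂ + α₃) :=
    mul_left_cancel₀ h2 (by linear_combination hf 1 + hf (-1) - 2 * hf 0)
  have hB : f B = α₁ * α₂ + α₁ * α₃ + α₂ * α₃ :=
    mul_left_cancel₀ h2 (by linear_combination hf 1 - hf (-1))
  have hC : f C = -(α₁ * α₂ * α₃) := by linear_combination hf 0
  ext <;> simp [ofRoots, hA, hB, hC]

end WeierstrassCurve

open WeierstrassCurve

open Classical in
/-- explicit description of all halves in `E(K)` of a point
`P = (x₀, y₀) ∈ E(K)`, where `E : y² = f(x)` and `f` is a monic cubic with distinct roots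
`α₁, α₂, α₃` in an algebraic closure `K̄` of `K`. -/
theorem halves_of_point_description {K : Type*} [Field K] (h2 : (2 : K) ≠ 0)
    (A B C : K) (E : WeierstrassCurve K) (hE : E = ⟨0, A, 0, B, C⟩)
    (α₁ α₂ α₃ : AlgebraicClosure K)
    (hf : ∀ z : AlgebraicClosure K,
      z ^ 3 + algebraMap K (AlgebraicClosure K) A * z ^ 2 +
        algebraMap K (AlgebraicClosure K) B * z + algebraMap K (AlgebraicClosure K) C =
        (z - α₁) * (z - α₂) * (z - α₃))
    (h12 : α₁ ≠ α₂) (h13 : α₁ ≠ α₃) (h23 : α₂ ≠ α₃)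
    (x₀ y₀ : K) (hP : E.toAffine.Nonsingular x₀ y₀) :
    -- (a) a triple of square roots with `s₁, s₂ ∈ K` yields a half of `P` in `E(K)`
    (∀ r₁ r₂ r₃ : AlgebraicClosure K, ∀ s₁ s₂ : K,
      r₁ ^ 2 = algebraMap K (AlgebraicClosure K) x₀ - α₁ →
      r₂ ^ 2 = algebraMap K (AlgebraicClosure K) x₀ - α₂ →
      r₃ ^ 2 = algebraMap K (AlgebraicClosure K) x₀ - α₃ →
      r₁ * r₂ * r₃ = -(algebraMap K (AlgebraicClosure K) y₀) →
      algebraMap K (AlgebraicClosure K) s₁ = r₁ + r₂ + r₃ →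
      algebraMap K (AlgebraicClosure K) s₂ = r₁ * r₂ + r₂ * r₃ + r₃ * r₁ →
      ∃ hQ : E.toAffine.Nonsingular (x₀ + s₂) (-y₀ - s₁ * s₂),
        2 • Affine.Point.some _ _ hQ = Affine.Point.some _ _ hP) ∧
    -- (b) conversely, every half of `P` in `E(K)` arises from exactly one such triple
    (∀ Q : E.toAffine.Point, 2 • Q = Affine.Point.some _ _ hP →
      ∃! r : AlgebraicClosure K × AlgebraicClosure K × AlgebraicClosure K,
        r.1 ^ 2 = algebraMap K (AlgebraicClosure K) x₀ - α₁ ∧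
        r.2.1 ^ 2 = algebraMap K (AlgebraicClosure K) x₀ - α₂ ∧
        r.2.2 ^ 2 = algebraMap K (AlgebraicClosure K) x₀ - α₃ ∧
        r.1 * r.2.1 * r.2.2 = -(algebraMap K (AlgebraicClosure K) y₀) ∧
        ∃ s₁ s₂ : K,
          algebraMap K (AlgebraicClosure K) s₁ = r.1 + r.2.1 + r.2.2 ∧
          algebraMap K (AlgebraicClosure K) s₂ = r.1 * r.2.1 + r.2.1 * r.2.2 + r.2.2 * r.1 ∧
          ∃ hQ : E.toAffine.Nonsingular (x₀ + s₂) (-y₀ - s₁ * s₂),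
            Q = Affine.Point.some _ _ hQ) := by
  subst hE
  have h2' : (2 : AlgebraicClosure K) ≠ 0 := by
    rw [← map_ofNat (algebraMap K (AlgebraicClosure K)) 2]
    exact (map_ne_zero _).mpr h2
  have hW := map_eq_ofRoots (algebraMap K (AlgebraicClosure K)) h2' hf
  exact ⟨fun r₁ r₂ r₃ s₁ s₂ => exists_two_nsmul_eq_of_sq_eq _ hW h2' h12 h13 h23 hP,
    existsUnique_sq_eq_of_two_nsmul_eq _ hW h2' hP⟩
end

section
/- Let K be a field of characteristic different from 2 with algebraic closure K̄, let f ∈ K[x] be a monic cubic without repeated roots whose roots in K̄ are α₁, α₂, α₃, let E : y² = f(x) be the associated elliptic curve over K, and let P = (x₀, y₀) ∈ E(K). Then the following are equivalent: (i) P ∈ 2E(K), i.e., there exists Q ∈ E(K) with 2Q = P; (ii) one may choose r₁, r₂, r₃ ∈ K̄ with rᵢ² = x₀ − αᵢ (i = 1, 2, 3) such that r₁ + r₂ + r₃ ∈ K and r₁r₂ + r₂r₃ + r₃r₁ ∈ K; (iii) one may choose r₁, r₂, r₃ ∈ K̄ with rᵢ² = x₀ − αᵢ (i = 1, 2, 3)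 such that r₁r₂r₃ = −y₀, r₁ + r₂ + r₃ ∈ K, and r₁r₂ + r₂r₃ + r₃r₁ ∈ K. -/
/-!
If `2 • Q = P` with `Q = (x₁, y₁)` and `ℓ` the slope of the tangent at `Q`, then
`rᵢ = (x₁ - αⱼ)(x₁ - αₖ)/y₁ - ℓ` are square roots of `x₀ - αᵢ` with `r₁ + r₂ + r₃ = -ℓ`,
`r₁r₂ + r₂r₃ + r₃r₁ = x₁ - x₀` and `r₁r₂r₃ = -y₀`. Conversely, writing `s₁, s₂` for the first two
elementary symmetric functions of such roots, `Q = (x₀ + s₂, -(s₁s₂ + y₀))` has tangent slope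
`-s₁` and doubles to `P`: since `x₀ + s₂ - αᵢ = (rᵢ + rⱼ)(rᵢ + rₖ)` every relation becomes a
polynomial identity in the `rᵢ`, and `y₁ ≠ 0` because the `αᵢ` are distinct. Without the condition
on `r₁r₂r₃`, its square is `y₀²`, so negating all `rᵢ` if necessary passes from (ii) to (iii).
-/

open WeierstrassCurve

/-- The tangent of slope `ℓ` to `y² = x³ + Ax² + Bx + C` at `(x₁, y₁)` meets the curve again at
`(x₀, -y₀)`, so that `(x₀, y₀) = 2 • (x₁, y₁)`. -/
def IsTangentDoubling {R : Type*} [CommRing R] (A B C x₁ y₁ ℓ x₀ y₀ : R) : Prop :=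
  y₁ ^ 2 = x₁ ^ 3 + A * x₁ ^ 2 + B * x₁ + C ∧ 2 * ℓ * y₁ = 3 * x₁ ^ 2 + 2 * A * x₁ + B ∧
    x₀ = ℓ ^ 2 - A - 2 * x₁ ∧ y₀ = -(ℓ * (x₀ - x₁) + y₁)

theorem isTangentDoubling_map_iff {R S : Type*} [CommRing R] [CommRing S] {f : R →+* S}
    (hf : Function.Injective f) {A B C x₁ y₁ ℓ x₀ y₀ : R} :
    IsTangentDoubling (f A) (f B) (f C) (f x₁) (f y₁) (f ℓ) (f x₀) (f y₀) ↔
      IsTangentDoubling A B C x₁ y₁ ℓ x₀ y₀ := by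
  simp only [IsTangentDoubling, ← map_ofNat f, ← map_pow, ← map_mul, ← map_add, ← map_sub,
    ← map_neg, hf.eq_iff]

theorem IsTangentDoubling.exists_sq_eq {L : Type*} [Field L] {α₁ α₂ α₃ x₁ y₁ ℓ x₀ y₀ : L}
    (h : IsTangentDoubling (-(α₁ + α₂ + α₃)) (α₁ * α₂ + α₂ * α₃ + α₃ * α₁) (-(α₁ * α₂ * α₃))
      x₁ y₁ ℓ x₀ y₀) (hy₁ : y₁ ≠ 0) :
    ∃ r₁ r₂ r₃ : L, r₁ ^ 2 = x₀ - α₁ ∧ r₂ ^ 2 = x₀ - α₂ ∧ r₃ ^ 2 = x₀ - α₃ ∧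
      r₁ * r₂ * r₃ = -y₀ ∧ r₁ + r₂ + r₃ = -ℓ ∧ r₁ * r₂ + r₂ * r₃ + r₃ * r₁ = x₁ - x₀ := by
  obtain ⟨hy, hℓ, rfl, rfl⟩ := h
  refine ⟨(x₁ - α₂) * (x₁ - α₃) / y₁ - ℓ, (x₁ - α₃) * (x₁ - α₁) / y₁ - ℓ,
    (x₁ - α₁) * (x₁ - α₂) / y₁ - ℓ, ?_, ?_, ?_, ?_, ?_, ?_⟩ <;> field_simp
  · linear_combination (2 * x₁ - α₂ - α₃) * hy - (x₁ - α₂) * (x₁ - α₃) * hℓ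
  · linear_combination (2 * x₁ - α₃ - α₁) * hy - (x₁ - α₃) * (x₁ - α₁) * hℓ
  · linear_combination (2 * x₁ - α₁ - α₂) * hy - (x₁ - α₁) * (x₁ - α₂) * hℓ
  · linear_combination (y₁ * ℓ * (3 * x₁ - α₁ - α₂ - α₃) - (x₁ - α₁) * (x₁ - α₂) * (x₁ - α₃)
      - y₁ ^ 2) * hy - (y₁ * ℓ) ^ 2 * hℓ
  · linear_combination -hℓ
  · linear_combination -(3 * x₁ - α₁ - α₂ - α₃) * hy + 2 * y₁ * ℓ * hℓ

theorem isTangentDoubling_of_sq_eq {R : Type*} [CommRing R] {α₁ α₂ α₃ x₀ y₀ r₁ r₂ r₃ : R}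
    (h₁ : r₁ ^ 2 = x₀ - α₁) (h₂ : r₂ ^ 2 = x₀ - α₂) (h₃ : r₃ ^ 2 = x₀ - α₃)
    (hprod : r₁ * r₂ * r₃ = -y₀) :
    IsTangentDoubling (-(α₁ + α₂ + α₃)) (α₁ * α₂ + α₂ * α₃ + α₃ * α₁) (-(α₁ * α₂ * α₃))
      (x₀ + (r₁ * r₂ + r₂ * r₃ + r₃ * r₁))
      (-((r₁ + r₂ + r₃) * (r₁ * r₂ + r₂ * r₃ + r₃ * r₁) + y₀)) (-(r₁ + r₂ + r₃)) x₀ y₀ := by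
  obtain rfl : α₁ = x₀ - r₁ ^ 2 := by linear_combination h₁
  obtain rfl : α₂ = x₀ - r₂ ^ 2 := by linear_combination h₂
  obtain rfl : α₃ = x₀ - r₃ ^ 2 := by linear_combination h₃
  obtain rfl : y₀ = -(r₁ * r₂ * r₃) := by linear_combination hprod
  exact ⟨by ring, by ring, by ring, by ring⟩

theorem IsTangentDoubling.y_ne_zero {R : Type*} [CommRing R] [IsDomain R]
    {α₁ α₂ α₃ x₁ y₁ ℓ x₀ y₀ : R}
    (h : IsTangentDoubling (-(α₁ + α₂ + α₃)) (α₁ * α₂ + α₂ * α₃ + α₃ * α₁) (-(α₁ * α₂ * α₃))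
      x₁ y₁ ℓ x₀ y₀) (h12 : α₁ ≠ α₂) (h13 : α₁ ≠ α₃) (h23 : α₂ ≠ α₃) : y₁ ≠ 0 := by
  rintro rfl
  obtain ⟨hy, hℓ, -, -⟩ := h
  have hroot : (x₁ - α₁) * (x₁ - α₂) * (x₁ - α₃) = 0 := by linear_combination -hy
  have hsum : (x₁ - α₁) * (x₁ - α₂) + (x₁ - α₂) * (x₁ - α₃) + (x₁ - α₃) * (x₁ - α₁) = 0 := by
    linear_combination -hℓ
  simp only [mul_eq_zero, sub_eq_zero] at hroot
  obtain (rfl | rfl) | rfl := hroot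
  · exact mul_ne_zero (sub_ne_zero.2 h12) (sub_ne_zero.2 h13) (by linear_combination hsum)
  · exact mul_ne_zero (sub_ne_zero.2 h12) (sub_ne_zero.2 h23) (by linear_combination -hsum)
  · exact mul_ne_zero (sub_ne_zero.2 h13) (sub_ne_zero.2 h23) (by linear_combination hsum)

namespace WeierstrassCurve.Affine

variable {F : Type*} [Field F] {W : Affine F}

theorem equation_iff_of_a₁_a₃ (ha₁ : W.a₁ = 0) (ha₃ : W.a₃ = 0) {x y : F} :
    W.Equation x y ↔ y ^ 2 = x ^ 3 + W.a₂ * x ^ 2 + W.a₄ * x + W.a₆ := by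
  rw [equation_iff, ha₁, ha₃]
  ring_nf

theorem ne_negY_iff_of_a₁_a₃ (h2 : (2 : F) ≠ 0) (ha₁ : W.a₁ = 0) (ha₃ : W.a₃ = 0) {x y : F} :
    y ≠ W.negY x y ↔ y ≠ 0 := by
  rw [negY, ha₁, ha₃, ne_eq, ← sub_eq_zero]
  ring_nf
  simp [h2]

theorem slope_self_of_a₁_a₃ [DecidableEq F] (h2 : (2 : F) ≠ 0) (ha₁ : W.a₁ = 0) (ha₃ : W.a₃ = 0)
    {x y : F} (hy : y ≠ 0) :
    W.slope x x y y = (3 * x ^ 2 + 2 * W.a₂ * x + W.a₄) / (2 * y) := by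
  rw [slope_of_Y_ne rfl ((ne_negY_iff_of_a₁_a₃ h2 ha₁ ha₃).2 hy), negY, ha₁, ha₃]
  ring_nf

theorem exists_two_nsmul_eq_some_iff [DecidableEq F] (h2 : (2 : F) ≠ 0) (ha₁ : W.a₁ = 0)
    (ha₃ : W.a₃ = 0) {x₀ y₀ : F} (hP : W.Nonsingular x₀ y₀) :
    (∃ Q : W.Point, 2 • Q = .some _ _ hP) ↔
      ∃ x₁ y₁ ℓ : F, y₁ ≠ 0 ∧ IsTangentDoubling W.a₂ W.a₄ W.a₆ x₁ y₁ ℓ x₀ y₀ := by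
  have hne {x y : F} := ne_negY_iff_of_a₁_a₃ (x := x) (y := y) h2 ha₁ ha₃
  constructor
  · rintro ⟨_ | @⟨x₁, y₁, h₁⟩, hQ⟩
    · exact absurd hQ.symm (by rw [← Point.zero_def, smul_zero]; exact Point.some_ne_zero hP)
    · rw [two_nsmul] at hQ
      by_cases hy : y₁ = W.negY x₁ y₁
      · rw [Point.add_self_of_Y_eq hy] at hQ
        exact absurd hQ.symm (Point.some_ne_zero hP)
      · rw [Point.add_self_of_Y_ne hy, Point.some.injEq] at hQ
        obtain ⟨rfl, rfl⟩ := hQ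
        have hy₁ := hne.1 hy
        refine ⟨x₁, y₁, W.slope x₁ x₁ y₁ y₁, hy₁, (equation_iff_of_a₁_a₃ ha₁ ha₃).1 h₁.1,
          ?_, ?_, ?_⟩
        · rw [slope_self_of_a₁_a₃ h2 ha₁ ha₃ hy₁]; field_simp
        all_goals simp only [addX, addY, negAddY, negY, ha₁, ha₃]; ring
  · rintro ⟨x₁, y₁, ℓ, hy₁, heq, hℓ, rfl, rfl⟩
    have h₁ : W.Nonsingular x₁ y₁ :=
      (nonsingular_iff _ _).2 ⟨(equation_iff_of_a₁_a₃ ha₁ ha₃).2 heq, Or.inr (hne.2 hy₁)⟩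
    have hslope : W.slope x₁ x₁ y₁ y₁ = ℓ := by
      rw [slope_self_of_a₁_a₃ h2 ha₁ ha₃ hy₁, div_eq_iff (mul_ne_zero h2 hy₁)]
      linear_combination -hℓ
    refine ⟨.some _ _ h₁, ?_⟩
    rw [two_nsmul, Point.add_self_of_Y_ne (hne.2 hy₁), Point.some.injEq, hslope]
    constructor <;> simp only [addX, addY, negAddY, negY, ha₁, ha₃] <;> ring

end WeierstrassCurve.Affine

theorem cubic_coeffs_eq_of_forall_eq_prod {R : Type*} [CommRing R] [IsDomain R] (h2 : (2 : R) ≠ 0)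
    {A B C α₁ α₂ α₃ : R}
    (hf : ∀ z, z ^ 3 + A * z ^ 2 + B * z + C = (z - α₁) * (z - α₂) * (z - α₃)) :
    A = -(α₁ + α₂ + α₃) ∧ B = α₁ * α₂ + α₂ * α₃ + α₃ * α₁ ∧ C = -(α₁ * α₂ * α₃) := by
  have hA : A = -(α₁ + α₂ + α₃) :=
    mul_left_cancel₀ h2 (by linear_combination hf 1 + hf (-1) - 2 * hf 0)
  exact ⟨hA, by linear_combination hf 1 - hf 0 - hA, by linear_combination hf 0⟩

theorem exists_sq_eq_with_prod_eq_neg {K L : Type*} [CommRing K] [CommRing L] [IsDomain L]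
    (φ : K →+* L) {α₁ α₂ α₃ x₀ y₀ : L} (hy₀ : y₀ ^ 2 = (x₀ - α₁) * (x₀ - α₂) * (x₀ - α₃))
    (h : ∃ r₁ r₂ r₃ : L, r₁ ^ 2 = x₀ - α₁ ∧ r₂ ^ 2 = x₀ - α₂ ∧ r₃ ^ 2 = x₀ - α₃ ∧
      r₁ + r₂ + r₃ ∈ Set.range φ ∧ r₁ * r₂ + r₂ * r₃ + r₃ * r₁ ∈ Set.range φ) :
    ∃ r₁ r₂ r₃ : L, r₁ ^ 2 = x₀ - α₁ ∧ r₂ ^ 2 = x₀ - α₂ ∧ r₃ ^ 2 = x₀ - α₃ ∧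
      r₁ * r₂ * r₃ = -y₀ ∧ r₁ + r₂ + r₃ ∈ Set.range φ ∧
      r₁ * r₂ + r₂ * r₃ + r₃ * r₁ ∈ Set.range φ := by
  obtain ⟨r₁, r₂, r₃, h₁, h₂, h₃, ⟨s₁, hs₁⟩, hs₂⟩ := h
  have hsq : (r₁ * r₂ * r₃) ^ 2 = y₀ ^ 2 := by rw [hy₀, mul_pow, mul_pow, h₁, h₂, h₃]
  rcases sq_eq_sq_iff_eq_or_eq_neg.1 hsq with hprod | hprod
  · refine ⟨-r₁, -r₂, -r₃, by rwa [neg_sq], by rwa [neg_sq], by rwa [neg_sq],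
      by linear_combination -hprod, ⟨-s₁, by rw [map_neg, hs₁]; ring⟩, ?_⟩
    simpa only [neg_mul_neg] using hs₂
  · exact ⟨r₁, r₂, r₃, h₁, h₂, h₃, hprod, ⟨s₁, hs₁⟩, hs₂⟩

theorem exists_isTangentDoubling_iff_exists_sq_eq {K L : Type*} [Field K] [Field L] (φ : K →+* L)
    {A B C x₀ y₀ : K} {α₁ α₂ α₃ : L} (hA : φ A = -(α₁ + α₂ + α₃))
    (hB : φ B = α₁ * α₂ + α₂ * α₃ + α₃ * α₁) (hC : φ C = -(α₁ * α₂ * α₃))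
    (h12 : α₁ ≠ α₂) (h13 : α₁ ≠ α₃) (h23 : α₂ ≠ α₃) :
    (∃ x₁ y₁ ℓ : K, y₁ ≠ 0 ∧ IsTangentDoubling A B C x₁ y₁ ℓ x₀ y₀) ↔
      ∃ r₁ r₂ r₃ : L, r₁ ^ 2 = φ x₀ - α₁ ∧ r₂ ^ 2 = φ x₀ - α₂ ∧ r₃ ^ 2 = φ x₀ - α₃ ∧
        r₁ * r₂ * r₃ = -φ y₀ ∧ r₁ + r₂ + r₃ ∈ Set.range φ ∧
        r₁ * r₂ + r₂ * r₃ + r₃ * r₁ ∈ Set.range φ := by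
  have hmap (x₁ y₁ ℓ : K) : IsTangentDoubling A B C x₁ y₁ ℓ x₀ y₀ ↔
      IsTangentDoubling (-(α₁ + α₂ + α₃)) (α₁ * α₂ + α₂ * α₃ + α₃ * α₁) (-(α₁ * α₂ * α₃))
        (φ x₁) (φ y₁) (φ ℓ) (φ x₀) (φ y₀) := by
    rw [← isTangentDoubling_map_iff φ.injective, hA, hB, hC]
  constructor
  · rintro ⟨x₁, y₁, ℓ, hy₁, hD⟩
    obtain ⟨r₁, r₂, r₃, h₁, h₂, h₃, hprod, hs₁, hs₂⟩ :=
      ((hmap x₁ y₁ ℓ).1 hD).exists_sq_eq ((map_ne_zero φ).2 hy₁)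
    exact ⟨r₁, r₂, r₃, h₁, h₂, h₃, hprod, ⟨-ℓ, by rw [map_neg, hs₁]⟩,
      ⟨x₁ - x₀, by rw [map_sub, hs₂]⟩⟩
  · rintro ⟨r₁, r₂, r₃, h₁, h₂, h₃, hprod, ⟨s₁, hs₁⟩, ⟨s₂, hs₂⟩⟩
    have hD : IsTangentDoubling A B C (x₀ + s₂) (-(s₁ * s₂ + y₀)) (-s₁) x₀ y₀ := by
      rw [hmap]
      simp only [map_add, map_neg, map_mul, hs₁, hs₂]
      exact isTangentDoubling_of_sq_eq h₁ h₂ h₃ hprod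
    exact ⟨_, _, _, (map_ne_zero φ).1 (((hmap _ _ _).1 hD).y_ne_zero h12 h13 h23), hD⟩

open Classical in
/-- criterion for divisibility by 2 in `E(K)` for `E : y² = f(x)` with `f` a
monic cubic with distinct roots `α₁, α₂, α₃` in an algebraic closure `K̄` of `K`. -/
theorem divisible_by_two_criterion {K : Type*} [Field K] (h2 : (2 : K) ≠ 0)
    (A B C : K) (E : WeierstrassCurve K) (hE : E = ⟨0, A, 0, B, C⟩)
    (α₁ α₂ α₃ : AlgebraicClosure K)
    (hf : ∀ z : AlgebraicClosure K,
      z ^ 3 + algebraMap K (AlgebraicClosure K) A * z ^ 2 +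
        algebraMap K (AlgebraicClosure K) B * z + algebraMap K (AlgebraicClosure K) C =
        (z - α₁) * (z - α₂) * (z - α₃))
    (h12 : α₁ ≠ α₂) (h13 : α₁ ≠ α₃) (h23 : α₂ ≠ α₃)
    (x₀ y₀ : K) (hP : E.toAffine.Nonsingular x₀ y₀) :
    ((∃ Q : E.toAffine.Point, 2 • Q = Affine.Point.some _ _ hP) ↔
      (∃ r₁ r₂ r₃ : AlgebraicClosure K,
        r₁ ^ 2 = algebraMap K (AlgebraicClosure K) x₀ - α₁ ∧
        r₂ ^ 2 = algebraMap K (AlgebraicClosure K) x₀ - α₂ ∧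
        r₃ ^ 2 = algebraMap K (AlgebraicClosure K) x₀ - α₃ ∧
        (∃ s₁ : K, algebraMap K (AlgebraicClosure K) s₁ = r₁ + r₂ + r₃) ∧
        (∃ s₂ : K, algebraMap K (AlgebraicClosure K) s₂ = r₁ * r₂ + r₂ * r₃ + r₃ * r₁))) ∧
    ((∃ Q : E.toAffine.Point, 2 • Q = Affine.Point.some _ _ hP) ↔
      (∃ r₁ r₂ r₃ : AlgebraicClosure K,
        r₁ ^ 2 = algebraMap K (AlgebraicClosure K) x₀ - α₁ ∧
        r₂ ^ 2 = algebraMap K (AlgebraicClosure K) x₀ - α₂ ∧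
        r₃ ^ 2 = algebraMap K (AlgebraicClosure K) x₀ - α₃ ∧
        r₁ * r₂ * r₃ = -(algebraMap K (AlgebraicClosure K) y₀) ∧
        (∃ s₁ : K, algebraMap K (AlgebraicClosure K) s₁ = r₁ + r₂ + r₃) ∧
        (∃ s₂ : K, algebraMap K (AlgebraicClosure K) s₂ = r₁ * r₂ + r₂ * r₃ + r₃ * r₁))) := by
  subst hE
  set φ := algebraMap K (AlgebraicClosure K)
  obtain ⟨hA, hB, hC⟩ :=
    cubic_coeffs_eq_of_forall_eq_prod (by simpa only [map_ofNat] using (map_ne_zero φ).2 h2) hf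
  have hy₀ : φ y₀ ^ 2 = (φ x₀ - α₁) * (φ x₀ - α₂) * (φ x₀ - α₃) := by
    rw [← hf, ← map_pow, (Affine.equation_iff_of_a₁_a₃ rfl rfl).1 hP.1]
    simp only [map_add, map_mul, map_pow]
  have key := (Affine.exists_two_nsmul_eq_some_iff h2 rfl rfl hP).trans
    (exists_isTangentDoubling_iff_exists_sq_eq φ hA hB hC h12 h13 h23)
  refine ⟨key.trans ⟨fun ⟨r₁, r₂, r₃, h₁, h₂, h₃, _, hs⟩ => ⟨r₁, r₂, r₃, h₁, h₂, h₃, hs⟩,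
    exists_sq_eq_with_prod_eq_neg φ hy₀⟩, key⟩
end

section
/- Let K be a field of characteristic different from 2, let g(x) = x² + px + q ∈ K[x] be a monic irreducible quadratic, let K_g = K[x]/(g(x)) be the corresponding quadratic field extension with 𝐱 the image of x, let α ∈ K, and let E : y² = (x − α)(x² + px + q) be the associated elliptic curve over K. Then a point P = (x₀, y₀) ∈ E(K) lies in 2E(K) if and only if x₀ − 𝐱 is a square in K_g. Moreover, if P ∈ 2E(K), then x₀ − α is a square in K. -/
open WeierstrassCurve Polynomial
open scoped Classical

/-!
Over `K_g` the cubic `f` splits as `(x - α)(x - 𝐱)(x - 𝐱')` with `𝐱' = -p - 𝐱`, and the classical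
halving formulas apply. If `P = 2Q` with `Q = (x₁, y₁)`, then for every root `e` of `f`, `x₀ - e`
is the square of `((x₁ - e)² - f'(e)) / 2y₁`. Conversely, if `x₀ - eᵢ = rᵢ²` for the three roots
with `r₁r₂r₃ = y₀`, then `(x₀ + r₁r₂ + r₁r₃ + r₂r₃, (r₁ + r₂)(r₁ + r₃)(r₂ + r₃))` is a half of `P`.
Given `x₀ - 𝐱 = (u + v𝐱)²`, its conjugate `u + v𝐱'` is a square root of `x₀ - 𝐱'`, the norm
`N = u² - uvp + v²q` satisfies `N² = g(x₀) ≠ 0`, and `x₀ - α = (y₀ / N)²`. The half point built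
from these square roots is symmetric in `𝐱, 𝐱'`, so it is defined over `K`.
-/

namespace WeierstrassCurve.Affine

variable {F : Type*} [Field F] [DecidableEq F] {W : Affine F}

lemma Point.two_nsmul_some_eq_some_iff_s7 {x₀ y₀ x₁ y₁ : F} {h₀ : W.Nonsingular x₀ y₀}
    {h₁ : W.Nonsingular x₁ y₁} :
    2 • Point.some x₁ y₁ h₁ = .some x₀ y₀ h₀ ↔ y₁ ≠ W.negY x₁ y₁ ∧
      W.addX x₁ x₁ (W.slope x₁ x₁ y₁ y₁) = x₀ ∧ W.addY x₁ x₁ y₁ (W.slope x₁ x₁ y₁ y₁) = y₀ := by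
  rw [two_nsmul]
  by_cases hy : y₁ = W.negY x₁ y₁
  · rw [add_self_of_Y_eq hy]
    exact iff_of_false (by simp) fun h ↦ h.1 hy
  · rw [add_self_of_Y_ne hy, some.injEq]
    exact ⟨fun h ↦ ⟨hy, h⟩, And.right⟩

lemma isSquare_sub_of_two_nsmul_eq_some (ha₁ : W.a₁ = 0) (ha₃ : W.a₃ = 0) {e : F}
    (he : e ^ 3 + W.a₂ * e ^ 2 + W.a₄ * e + W.a₆ = 0) {x₀ y₀ : F} {h₀ : W.Nonsingular x₀ y₀}
    {Q : W.Point} (hQ : 2 • Q = .some x₀ y₀ h₀) : IsSquare (x₀ - e) := by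
  rcases Q with _ | ⟨x₁, y₁, h₁⟩
  · rw [← Point.zero_def, smul_zero] at hQ
    cases hQ
  obtain ⟨hy, hx, -⟩ := Point.two_nsmul_some_eq_some_iff_s7.mp hQ
  have hy₁ : 2 * y₁ ≠ 0 := by
    refine fun h ↦ hy ?_
    simp only [negY, ha₁, ha₃]
    linear_combination h
  have hslope : W.slope x₁ x₁ y₁ y₁ * (2 * y₁) = 3 * x₁ ^ 2 + 2 * W.a₂ * x₁ + W.a₄ := by
    rw [slope_of_Y_ne rfl hy, div_mul_eq_mul_div, div_eq_iff (sub_ne_zero.mpr hy)]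
    simp only [negY, ha₁, ha₃]
    ring
  have heq : y₁ ^ 2 = x₁ ^ 3 + W.a₂ * x₁ ^ 2 + W.a₄ * x₁ + W.a₆ := by
    simpa [ha₁, ha₃] using (equation_iff x₁ y₁).mp h₁.1
  refine ⟨((x₁ - e) ^ 2 - (3 * e ^ 2 + 2 * W.a₂ * e + W.a₄)) / (2 * y₁), ?_⟩
  rw [← hx, addX, ha₁, div_mul_div_comm, eq_div_iff (mul_ne_zero hy₁ hy₁)]
  linear_combination (W.slope x₁ x₁ y₁ y₁ * (2 * y₁) + 3 * x₁ ^ 2 + 2 * W.a₂ * x₁ + W.a₄) * hslope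
    - 4 * (W.a₂ + 2 * x₁ + e) * heq - 4 * (W.a₂ + 2 * x₁ + e) * he

lemma two_nsmul_some_eq_some_of_sq_eq (h2 : (2 : F) ≠ 0) (ha₁ : W.a₁ = 0) (ha₃ : W.a₃ = 0)
    {e₁ e₂ e₃ : F} (ha₂ : W.a₂ = -(e₁ + e₂ + e₃)) (ha₄ : W.a₄ = e₁ * e₂ + e₁ * e₃ + e₂ * e₃)
    (ha₆ : W.a₆ = -(e₁ * e₂ * e₃)) (h₁₂ : e₁ ≠ e₂) (h₁₃ : e₁ ≠ e₃) (h₂₃ : e₂ ≠ e₃)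
    {x₀ y₀ r₁ r₂ r₃ : F} (hr₁ : x₀ - e₁ = r₁ ^ 2) (hr₂ : x₀ - e₂ = r₂ ^ 2)
    (hr₃ : x₀ - e₃ = r₃ ^ 2) (hy₀ : y₀ = r₁ * r₂ * r₃) {h₀ : W.Nonsingular x₀ y₀} :
    ∃ h : W.Nonsingular (x₀ + r₁ * r₂ + r₁ * r₃ + r₂ * r₃) ((r₁ + r₂) * (r₁ + r₃) * (r₂ + r₃)),
      2 • Point.some _ _ h = .some x₀ y₀ h₀ := by
  have root_add_ne_zero {a b r s : F} (ha : x₀ - a = r ^ 2) (hb : x₀ - b = s ^ 2) (hab : a ≠ b) :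
      r + s ≠ 0 := by
    refine fun h ↦ hab ?_
    rw [eq_neg_of_add_eq_zero_left h] at ha
    linear_combination hb - ha
  have hy₁ : 2 * ((r₁ + r₂) * (r₁ + r₃) * (r₂ + r₃)) ≠ 0 := by
    have := root_add_ne_zero hr₁ hr₂ h₁₂
    have := root_add_ne_zero hr₁ hr₃ h₁₃
    have := root_add_ne_zero hr₂ hr₃ h₂₃
    positivity
  obtain rfl : e₁ = x₀ - r₁ ^ 2 := by linear_combination -hr₁
  obtain rfl : e₂ = x₀ - r₂ ^ 2 := by linear_combination -hr₂
  obtain rfl : e₃ = x₀ - r₃ ^ 2 := by linear_combination -hr₃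
  subst hy₀
  have hneg (x y : F) : W.negY x y = -y := by
    simp only [negY, ha₁, ha₃]
    ring
  have hyne : (r₁ + r₂) * (r₁ + r₃) * (r₂ + r₃) ≠
      W.negY (x₀ + r₁ * r₂ + r₁ * r₃ + r₂ * r₃) ((r₁ + r₂) * (r₁ + r₃) * (r₂ + r₃)) := by
    rw [hneg]
    exact fun h ↦ hy₁ (by linear_combination h)
  have heq : W.Equation (x₀ + r₁ * r₂ + r₁ * r₃ + r₂ * r₃) ((r₁ + r₂) * (r₁ + r₃) * (r₂ + r₃)) := by
    rw [equation_iff, ha₁, ha₂, ha₃, ha₄, ha₆]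
    ring
  have hslope : W.slope (x₀ + r₁ * r₂ + r₁ * r₃ + r₂ * r₃) (x₀ + r₁ * r₂ + r₁ * r₃ + r₂ * r₃)
      ((r₁ + r₂) * (r₁ + r₃) * (r₂ + r₃)) ((r₁ + r₂) * (r₁ + r₃) * (r₂ + r₃)) = r₁ + r₂ + r₃ := by
    rw [slope_of_Y_ne rfl hyne, div_eq_iff (sub_ne_zero.mpr hyne), hneg, ha₁, ha₂, ha₄]
    ring
  refine ⟨(nonsingular_iff _ _).mpr ⟨heq, .inr hyne⟩,
    Point.two_nsmul_some_eq_some_iff_s7.mpr ⟨hyne, ?_, ?_⟩⟩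
  · rw [hslope, addX, ha₁, ha₂]
    ring
  · rw [hslope, addY, negAddY, addX, hneg, ha₁, ha₂]
    ring

end WeierstrassCurve.Affine

section BaseChange

open WeierstrassCurve.Affine

variable {K L : Type*} [Field K] [Field L] [DecidableEq K] [DecidableEq L] [Algebra K L]
  {W : WeierstrassCurve K}

lemma isSquare_algebraMap_sub_of_two_nsmul_eq_some (ha₁ : W.a₁ = 0) (ha₃ : W.a₃ = 0) {e : L}
    (he : e ^ 3 + algebraMap K L W.a₂ * e ^ 2 + algebraMap K L W.a₄ * e + algebraMap K L W.a₆ = 0)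
    {x₀ y₀ : K} {h₀ : W.toAffine.Nonsingular x₀ y₀} {Q : W.toAffine.Point}
    (hQ : 2 • Q = .some x₀ y₀ h₀) : IsSquare (algebraMap K L x₀ - e) :=
  isSquare_sub_of_two_nsmul_eq_some (W := W⁄L) (by simp [ha₁]) (by simp [ha₃]) he
    ((map_nsmul (Point.map (W' := W) (Algebra.ofId K L)) 2 Q).symm.trans (congrArg _ hQ))

lemma exists_two_nsmul_eq_of_two_nsmul_baseChange_eq {x₀ y₀ x₁ y₁ : K}
    {h₀ : W.toAffine.Nonsingular x₀ y₀} {x₁' y₁' : L} (hx : algebraMap K L x₁ = x₁')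
    (hy : algebraMap K L y₁ = y₁') {h₁ : (W⁄L).Nonsingular x₁' y₁'}
    {h₀' : (W⁄L).Nonsingular (algebraMap K L x₀) (algebraMap K L y₀)}
    (h : 2 • Point.some _ _ h₁ = .some _ _ h₀') :
    ∃ Q : W.toAffine.Point, 2 • Q = .some _ _ h₀ := by
  subst hx hy
  have h₁ : W.toAffine.Nonsingular x₁ y₁ :=
    (baseChange_nonsingular W (Algebra.ofId K L).injective x₁ y₁).mp h₁
  refine ⟨.some x₁ y₁ h₁, Point.map_injective (Algebra.ofId K L) (W' := W) ?_⟩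
  exact (map_nsmul (Point.map (W' := W) (Algebra.ofId K L)) 2 (.some x₁ y₁ h₁)).trans h

end BaseChange

section QuadraticExtension

variable {K : Type*} [Field K] {p q : K}

lemma sq_add_mul_add_ne_zero_of_irreducible (hirr : Irreducible (X ^ 2 + C p * X + C q)) (t : K) :
    t ^ 2 + p * t + q ≠ 0 := by
  have hdeg : (X ^ 2 + C p * X + C q).natDegree = 2 := by compute_degree!
  simpa using hirr.not_isRoot_of_natDegree_ne_one (by omega) (x := t)

lemma AdjoinRoot.root_sq_add_mul_root_add_eq_zero :
    root (X ^ 2 + C p * X + C q) ^ 2 + algebraMap K _ p * root (X ^ 2 + C p * X + C q)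
      + algebraMap K _ q = 0 := by
  have h := eval₂_root (X ^ 2 + C p * X + C q)
  simp only [eval₂_add, eval₂_mul, eval₂_X_pow, eval₂_C, eval₂_X] at h
  exact h

lemma AdjoinRoot.exists_eq_algebraMap_add_algebraMap_mul_root {g : K[X]} (hg : g.natDegree = 2)
    (z : AdjoinRoot g) : ∃ u v : K, z = algebraMap K _ u + algebraMap K _ v * root g := by
  nontriviality AdjoinRoot g
  have hg0 : g ≠ 0 := by rintro rfl; simp at hg
  obtain ⟨f, hf, rfl⟩ := (powerBasis hg0).exists_eq_aeval z
  rw [powerBasis_dim, hg] at hf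
  rw [eq_X_add_C_of_natDegree_le_one (by omega : f.natDegree ≤ 1)]
  exact ⟨f.coeff 0, f.coeff 1, by simp [add_comm]⟩

lemma eq_and_eq_of_algebraMap_add_mul_eq {L : Type*} [Field L] [Algebra K L] {θ : L}
    (hθ : θ ∉ Set.range (algebraMap K L)) {a b c d : K}
    (h : algebraMap K L a + algebraMap K L b * θ = algebraMap K L c + algebraMap K L d * θ) :
    a = c ∧ b = d := by
  by_cases hbd : b = d
  · subst hbd
    exact ⟨(algebraMap K L).injective (add_right_cancel h), rfl⟩
  · refine absurd ⟨(a - c) / (d - b), ?_⟩ hθ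
    have : algebraMap K L d - algebraMap K L b ≠ 0 := by
      rw [← map_sub]
      exact (_root_.map_ne_zero _).mpr (sub_ne_zero.mpr (Ne.symm hbd))
    rw [map_div₀, div_eq_iff (by simpa using this), map_sub, map_sub]
    linear_combination h

lemma exists_sq_eq_sub_and_eq_mul_of_sq_eq {α x₀ y₀ u v : K}
    (hirr : Irreducible (X ^ 2 + C p * X + C q))
    (hcurve : y₀ ^ 2 = (x₀ - α) * (x₀ ^ 2 + p * x₀ + q)) (hx₀ : x₀ = u ^ 2 - v ^ 2 * q)
    (huv : -1 = 2 * u * v - v ^ 2 * p) :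
    ∃ w, x₀ - α = w ^ 2 ∧ y₀ = w * (u ^ 2 - u * v * p + v ^ 2 * q) := by
  set N := u ^ 2 - u * v * p + v ^ 2 * q
  have hN : N ^ 2 = x₀ ^ 2 + p * x₀ + q := by
    linear_combination (q - 2 * q * u * v + p * u ^ 2) * huv - (x₀ + u ^ 2 - v ^ 2 * q + p) * hx₀
  have hN0 : N ≠ 0 := fun h ↦
    sq_add_mul_add_ne_zero_of_irreducible hirr x₀ (by rw [← hN, h]; ring)
  refine ⟨y₀ / N, ?_, (div_mul_cancel₀ y₀ hN0).symm⟩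
  rw [div_pow, eq_div_iff (pow_ne_zero 2 hN0)]
  linear_combination (x₀ - α) * hN - hcurve

end QuadraticExtension

section

open WeierstrassCurve.Affine

variable {K L : Type*} [Field K] [Field L] [DecidableEq L] [Algebra K L] {p q α : K}

lemma exists_two_nsmul_eq_of_sub_eq_sq (h2 : (2 : K) ≠ 0) {θ : L}
    (hθ : θ ^ 2 + algebraMap K L p * θ + algebraMap K L q = 0)
    (hθK : θ ∉ Set.range (algebraMap K L)) {x₀ y₀ u v w : K}
    (hP : (⟨0, p - α, 0, q - α * p, -(α * q)⟩ : WeierstrassCurve K).toAffine.Nonsingular x₀ y₀)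
    (hx₀ : x₀ = u ^ 2 - v ^ 2 * q) (huv : -1 = 2 * u * v - v ^ 2 * p) (hw : x₀ - α = w ^ 2)
    (hy₀ : y₀ = w * (u ^ 2 - u * v * p + v ^ 2 * q)) :
    ∃ Q, 2 • Q = Point.some _ _ hP := by
  set φ := algebraMap K L
  have h2L : (2 : L) ≠ 0 := fun h ↦ h2 (φ.injective (by rw [map_ofNat, h, map_zero]))
  have hx₀L : φ x₀ = φ u ^ 2 - φ v ^ 2 * φ q := by
    rw [hx₀]
    simp only [map_sub, map_mul, map_pow]
  have huvL : -1 = 2 * φ u * φ v - φ v ^ 2 * φ p := by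
    simpa only [map_neg, map_one, map_sub, map_mul, map_pow, map_ofNat] using congrArg φ huv
  have hy₀L : φ y₀ = φ w * (φ u ^ 2 - φ u * φ v * φ p + φ v ^ 2 * φ q) := by
    rw [hy₀]
    simp only [map_add, map_sub, map_mul, map_pow]
  -- `r₃` is the conjugate of `r₂` under `θ ↦ -p - θ`
  obtain ⟨h₁, hdouble⟩ := two_nsmul_some_eq_some_of_sq_eq
    (W := (⟨0, p - α, 0, q - α * p, -(α * q)⟩ : WeierstrassCurve K)⁄L)
    (x₀ := φ x₀) (y₀ := φ y₀) (e₁ := φ α) (e₂ := θ) (e₃ := -φ p - θ)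
    (r₁ := φ w) (r₂ := φ u + φ v * θ) (r₃ := φ (u - v * p) - φ v * θ)
    (h₀ := (baseChange_nonsingular _ (Algebra.ofId K L).injective x₀ y₀).mpr hP)
    h2L (by simp) (by simp)
    (by simp only [baseChange_a₂, map_sub]; ring)
    (by simp only [baseChange_a₄, map_sub, map_mul]; linear_combination hθ)
    (by simp only [baseChange_a₆, map_neg, map_mul]; linear_combination -φ α * hθ)
    (fun h ↦ hθK ⟨α, h⟩)
    (fun h ↦ hθK ⟨-p - α, by simp only [map_sub, map_neg]; linear_combination -h⟩)
    (fun h ↦ hθK ⟨-p / 2, by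
      rw [map_div₀, map_neg, map_ofNat, div_eq_iff h2L]
      linear_combination -h⟩)
    (by rw [← map_sub, hw, map_pow])
    (by linear_combination hx₀L + θ * huvL - φ v ^ 2 * hθ)
    (by simp only [map_sub, map_mul]; linear_combination hx₀L - (φ p + θ) * huvL - φ v ^ 2 * hθ)
    (by simp only [map_sub, map_mul]; linear_combination hy₀L + φ w * φ v ^ 2 * hθ)
  refine exists_two_nsmul_eq_of_two_nsmul_baseChange_eq
    (x₁ := x₀ + w * (2 * u - v * p) + (u ^ 2 - u * v * p + v ^ 2 * q))
    (y₁ := (w ^ 2 + w * (2 * u - v * p) + (u ^ 2 - u * v * p + v ^ 2 * q)) * (2 * u - v * p))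
    ?_ ?_ hdouble
  · simp only [map_add, map_sub, map_mul, map_pow, map_ofNat]
    linear_combination φ v ^ 2 * hθ
  · simp only [map_add, map_sub, map_mul, map_pow, map_ofNat]
    linear_combination (2 * φ u * φ v ^ 2 - φ v ^ 3 * φ p) * hθ

lemma exists_two_nsmul_eq_of_isSquare_sub_root (h2 : (2 : K) ≠ 0)
    (hirr : Irreducible (X ^ 2 + C p * X + C q)) {x₀ y₀ : K}
    (hP : (⟨0, p - α, 0, q - α * p, -(α * q)⟩ : WeierstrassCurve K).toAffine.Nonsingular x₀ y₀)
    (hsq : IsSquare (algebraMap K (AdjoinRoot (X ^ 2 + C p * X + C q)) x₀ - AdjoinRoot.root _)) :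
    ∃ Q, 2 • Q = Point.some _ _ hP := by
  have := Fact.mk hirr
  set φ := algebraMap K (AdjoinRoot (X ^ 2 + C p * X + C q))
  set θ := AdjoinRoot.root (X ^ 2 + C p * X + C q)
  have hθ : θ ^ 2 + φ p * θ + φ q = 0 := AdjoinRoot.root_sq_add_mul_root_add_eq_zero
  have hθK : θ ∉ Set.range φ := by
    rintro ⟨t, ht⟩
    rw [← ht] at hθ
    exact sq_add_mul_add_ne_zero_of_irreducible hirr t (φ.injective (by simpa using hθ))
  obtain ⟨z, hz⟩ := hsq
  obtain ⟨u, v, rfl⟩ :=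
    AdjoinRoot.exists_eq_algebraMap_add_algebraMap_mul_root (by compute_degree!) z
  obtain ⟨hx₀, huv⟩ : x₀ = u ^ 2 - v ^ 2 * q ∧ -1 = 2 * u * v - v ^ 2 * p := by
    refine eq_and_eq_of_algebraMap_add_mul_eq hθK ?_
    simp only [map_sub, map_mul, map_pow, map_neg, map_one, map_ofNat]
    linear_combination hz + φ v ^ 2 * hθ
  have hcurve : y₀ ^ 2 = (x₀ - α) * (x₀ ^ 2 + p * x₀ + q) := by
    linear_combination (equation_iff x₀ y₀).mp hP.1
  obtain ⟨w, hw, hy₀⟩ := exists_sq_eq_sub_and_eq_mul_of_sq_eq hirr hcurve hx₀ huv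
  exact exists_two_nsmul_eq_of_sub_eq_sq h2 hθ hθK hP hx₀ huv hw hy₀

end

/-- for `E : y² = (x − α)g(x)` with `g` monic irreducible quadratic, a point
`P = (x₀, y₀) ∈ E(K)` is divisible by 2 in `E(K)` iff `x₀ − 𝐱` is a square in
`K_g = K[x]/(g)`; moreover in that case `x₀ − α` is a square in `K`. -/
theorem divisible_by_two_iff_square_in_quadratic_ext {K : Type*} [Field K]
    (h2 : (2 : K) ≠ 0) (p q α : K)
    (g : K[X]) (hg : g = X ^ 2 + C p * X + C q) (hirr : Irreducible g)
    (E : WeierstrassCurve K) (hE : E = ⟨0, p - α, 0, q - α * p, -(α * q)⟩)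
    (x₀ y₀ : K) (hP : E.toAffine.Nonsingular x₀ y₀) :
    ((∃ Q : E.toAffine.Point, 2 • Q = Affine.Point.some _ _ hP) ↔
        IsSquare (algebraMap K (AdjoinRoot g) x₀ - AdjoinRoot.root g)) ∧
    ((∃ Q : E.toAffine.Point, 2 • Q = Affine.Point.some _ _ hP) → IsSquare (x₀ - α)) := by
  subst hg hE
  have := Fact.mk hirr
  refine ⟨⟨fun ⟨Q, hQ⟩ ↦ ?_, exists_two_nsmul_eq_of_isSquare_sub_root h2 hirr hP⟩,
    fun ⟨Q, hQ⟩ ↦ ?_⟩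
  · refine isSquare_algebraMap_sub_of_two_nsmul_eq_some rfl rfl ?_ hQ
    simp only [map_sub, map_mul, map_neg]
    linear_combination (AdjoinRoot.root _ - algebraMap K _ α) *
      AdjoinRoot.root_sq_add_mul_root_add_eq_zero (p := p) (q := q)
  · simpa using isSquare_algebraMap_sub_of_two_nsmul_eq_some (L := K) (e := α) rfl rfl
      (by simp only [Algebra.algebraMap_self, RingHom.id_apply]; ring) hQ
end

section
/- Let K be a field of characteristic different from 2, let g(x) = x² + px + q ∈ K[x] be a monic irreducible quadratic, let K_g = K[x]/(g(x)) with 𝐱 the image of x, let Tr and N be the trace and norm of K_g over K, let α ∈ K, and let E : y² = (x − α)(x² + px + q) be the associated elliptic curve over K. Suppose P = (x₀, y₀) ∈ E(K), r ∈ K, and 𝔯 ∈ K_g satisfy r² = x₀ − α, 𝔯² = x₀ − 𝐱, and r·N(𝔯) = −y₀. Then the points Q₊ := (x₀ + Tr(𝔯)·r + N(𝔯), −y₀ − (r + Tr(𝔯))·(Tr(𝔯)·r + N(𝔯))) and Q₋ := (x₀ − Tr(𝔯)·r + N(𝔯), −y₀ − (r − Tr(𝔯))·(−Tr(𝔯)·r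 + N(𝔯))) are distinct points of E(K) satisfying 2Q₊ = 2Q₋ = P. -/
/-!
Write `t = Tr 𝔯` and `n = N 𝔯`. Since `K_g` has rank two over `K`, Cayley–Hamilton gives
`𝔯² - t𝔯 + n = 0`, so `t𝔯 = x₀ + n - 𝐱`. As `𝐱 ∉ K`, this forces `t ≠ 0`, and taking traces
and norms gives the two relations `t² = 2(x₀ + n) + p` and `n² = g(x₀)` in `K`. With these
relations, the tangent to `E` at `Q₊` has slope `-(r + t)` and meets `E` again at `-P`, so
`2Q₊ = P`. Replacing `t` by `-t` gives `Q₋`.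
-/

open WeierstrassCurve Polynomial

theorem Algebra.sq_sub_trace_mul_add_norm {K S : Type*} [Field K] [CommRing S] [Algebra K S]
    (b : Module.Basis (Fin 2) K S) (z : S) :
    z ^ 2 - algebraMap K S (trace K S z) * z + algebraMap K S (norm K z) = 0 := by
  apply leftMulMatrix_injective b
  rw [map_zero, map_add, map_sub, map_pow, map_mul, AlgHom.commutes, AlgHom.commutes,
    trace_eq_matrix_trace b z, norm_eq_matrix_det b z]
  ext i j
  fin_cases i <;> fin_cases j <;>
    simp [sq, Matrix.mul_apply, Matrix.trace_fin_two, Matrix.det_fin_two,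
      Matrix.algebraMap_matrix_apply] <;> ring

theorem PowerBasis.norm_algebraMap_sub_gen {R S : Type*} [CommRing R] [Ring S] [Algebra R S]
    (pb : PowerBasis R S) (c : R) :
    Algebra.norm R (algebraMap R S c - pb.gen) = (minpoly R pb.gen).eval c := by
  rw [Algebra.norm_eq_matrix_det pb.basis, ← charpoly_leftMulMatrix, Matrix.eval_charpoly,
    map_sub, AlgHom.commutes, Matrix.algebraMap_eq_diagonal]
  rfl

namespace AdjoinRoot

variable {K : Type*} [Field K] {g : K[X]}

theorem algebraMap_ne_root [Fact (Irreducible g)] (hdeg : g.natDegree ≠ 1) (c : K) :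
    algebraMap K (AdjoinRoot g) c ≠ root g := by
  intro h
  apply (Fact.out : Irreducible g).not_isRoot_of_natDegree_ne_one hdeg (x := c)
  apply (algebraMap K (AdjoinRoot g)).injective
  rw [map_zero, ← aeval_algebraMap_apply_eq_algebraMap_eval, h, aeval_eq, mk_self]

theorem norm_algebraMap_sub_root (hg : g.Monic) (c : K) :
    Algebra.norm K (algebraMap K (AdjoinRoot g) c - root g) = g.eval c := by
  rw [← powerBasis_gen hg.ne_zero, PowerBasis.norm_algebraMap_sub_gen,
    minpoly_powerBasis_gen_of_monic hg]

theorem trace_root [Fact (Irreducible g)] (hg : g.Monic) :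
    Algebra.trace K (AdjoinRoot g) (root g) = -g.nextCoeff := by
  rw [← powerBasis_gen hg.ne_zero, PowerBasis.trace_gen_eq_nextCoeff_minpoly,
    minpoly_powerBasis_gen_of_monic hg]

section SqEqAlgebraMapSubRoot

variable {x₀ : K} {ρ : AdjoinRoot g}

theorem norm_sq_of_sq_eq_algebraMap_sub_root (hg : g.Monic)
    (hρ : ρ ^ 2 = algebraMap K (AdjoinRoot g) x₀ - root g) :
    Algebra.norm K ρ ^ 2 = g.eval x₀ := by
  rw [← map_pow, hρ, norm_algebraMap_sub_root hg]

theorem trace_mul_of_sq_eq_algebraMap_sub_root (hg : g.Monic) (hdeg : g.natDegree = 2)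
    (hρ : ρ ^ 2 = algebraMap K (AdjoinRoot g) x₀ - root g) :
    algebraMap K _ (Algebra.trace K _ ρ) * ρ =
      algebraMap K _ (x₀ + Algebra.norm K ρ) - root g := by
  have hCH := Algebra.sq_sub_trace_mul_add_norm ((powerBasis' hg).basis.reindex (finCongr hdeg)) ρ
  rw [map_add]
  linear_combination hρ - hCH

variable [Fact (Irreducible g)]

theorem trace_ne_zero_of_sq_eq_algebraMap_sub_root (hg : g.Monic) (hdeg : g.natDegree = 2)
    (hρ : ρ ^ 2 = algebraMap K (AdjoinRoot g) x₀ - root g) :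
    Algebra.trace K _ ρ ≠ 0 := by
  intro h
  have h' := trace_mul_of_sq_eq_algebraMap_sub_root hg hdeg hρ
  rw [h, map_zero, zero_mul, eq_comm, sub_eq_zero] at h'
  exact algebraMap_ne_root (by omega) _ h'

theorem trace_sq_of_sq_eq_algebraMap_sub_root (hg : g.Monic) (hdeg : g.natDegree = 2)
    (hρ : ρ ^ 2 = algebraMap K (AdjoinRoot g) x₀ - root g) :
    Algebra.trace K _ ρ ^ 2 = 2 * (x₀ + Algebra.norm K ρ) + g.nextCoeff := by
  have h := congrArg (Algebra.trace K _) (trace_mul_of_sq_eq_algebraMap_sub_root hg hdeg hρ)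
  rwa [← Algebra.smul_def, map_smul, smul_eq_mul, map_sub, Algebra.trace_algebraMap,
    trace_root hg, (powerBasis' hg).finrank, powerBasis'_dim, hdeg, ← sq, nsmul_eq_mul,
    Nat.cast_ofNat, sub_neg_eq_add] at h

end SqEqAlgebraMapSubRoot

end AdjoinRoot

theorem WeierstrassCurve.Affine.two_nsmul_some_of_Y_ne {F : Type*} [Field F] [DecidableEq F]
    {W : Affine F} {x₁ y₁ x₂ y₂ ℓ : F} (h₁ : W.Nonsingular x₁ y₁) (h₂ : W.Nonsingular x₂ y₂)
    (hy : y₁ ≠ W.negY x₁ y₁) (hℓ : W.slope x₁ x₁ y₁ y₁ = ℓ)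
    (hx₂ : W.addX x₁ x₁ ℓ = x₂) (hy₂ : W.addY x₁ x₁ y₁ ℓ = y₂) :
    2 • Point.some _ _ h₁ = Point.some _ _ h₂ := by
  subst hℓ hx₂ hy₂
  rw [two_nsmul, Point.add_self_of_Y_ne hy]

/-- The curve `y² = (x - α)(x² + px + q)`. -/
abbrev WeierstrassCurve.ofSplitCubic {K : Type*} [Field K] (α p q : K) : WeierstrassCurve K :=
  ⟨0, p - α, 0, q - α * p, -(α * q)⟩

namespace WeierstrassCurve.ofSplitCubic

variable {K : Type*} [Field K] {α p q x₀ y₀ r t n : K}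

theorem exists_two_nsmul_some_eq [DecidableEq K] {x₁ y₁ : K} (h2 : (2 : K) ≠ 0)
    (hα : α ^ 2 + p * α + q ≠ 0) (hP : (ofSplitCubic α p q).toAffine.Nonsingular x₀ y₀)
    (hr : r ^ 2 = x₀ - α) (hy₀ : r * n = -y₀) (hn : n ^ 2 = x₀ ^ 2 + p * x₀ + q)
    (ht : t ^ 2 = 2 * (x₀ + n) + p) (ht0 : t ≠ 0)
    (hx₁ : x₁ = x₀ + t * r + n) (hy₁ : y₁ = -y₀ - (r + t) * (t * r + n)) :
    ∃ hQ : (ofSplitCubic α p q).toAffine.Nonsingular x₁ y₁,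
      2 • Affine.Point.some _ _ hQ = Affine.Point.some _ _ hP := by
  obtain rfl : x₀ = r ^ 2 + α := by linear_combination -hr
  obtain rfl : y₀ = -(r * n) := by linear_combination hy₀
  have hs : r ^ 2 + t * r + n ≠ 0 := fun hs ↦
    hα (by linear_combination (-1 : K) * hn + r ^ 2 * ht + (n + r ^ 2 - t * r) * hs)
  have hY : y₁ ≠ (ofSplitCubic α p q).toAffine.negY x₁ y₁ := by
    rw [Affine.negY, show y₁ = -t * (r ^ 2 + t * r + n) by rw [hy₁]; ring]
    intro h
    exact mul_ne_zero (mul_ne_zero h2 (neg_ne_zero.2 ht0)) hs (by linear_combination h)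
  have hQ : (ofSplitCubic α p q).toAffine.Nonsingular x₁ y₁ := by
    refine (Affine.nonsingular_iff _ _).mpr ⟨?_, Or.inr hY⟩
    rw [Affine.equation_iff, hx₁, hy₁]
    linear_combination (n ^ 2 + 2 * r * t * n + r ^ 2 * n + r ^ 2 * t ^ 2 + r ^ 3 * t) * ht +
      (n + r * t + r ^ 2) * hn
  have hℓ : (ofSplitCubic α p q).toAffine.slope x₁ x₁ y₁ y₁ = -(r + t) := by
    rw [Affine.slope_of_Y_ne rfl hY, div_eq_iff (sub_ne_zero.2 hY), Affine.negY, hx₁, hy₁]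
    linear_combination (-2 * n - 2 * r * t - r ^ 2) * ht - hn
  have hX : (ofSplitCubic α p q).toAffine.addX x₁ x₁ (-(r + t)) = r ^ 2 + α := by
    rw [Affine.addX, hx₁]
    linear_combination ht
  refine ⟨hQ, Affine.two_nsmul_some_of_Y_ne hQ hP hY hℓ hX ?_⟩
  rw [Affine.addY, Affine.negY, Affine.negAddY, hX, hx₁, hy₁]
  ring

theorem some_ne_some_of_ne_zero (h2 : (2 : K) ≠ 0) (hα : α ^ 2 + p * α + q ≠ 0)
    (hr : r ^ 2 = x₀ - α) (hn : n ^ 2 = x₀ ^ 2 + p * x₀ + q) (ht0 : t ≠ 0)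
    (hplus : (ofSplitCubic α p q).toAffine.Nonsingular
      (x₀ + t * r + n) (-y₀ - (r + t) * (t * r + n)))
    (hminus : (ofSplitCubic α p q).toAffine.Nonsingular
      (x₀ - t * r + n) (-y₀ - (r - t) * (-(t * r) + n))) :
    Affine.Point.some _ _ hplus ≠ Affine.Point.some _ _ hminus := by
  rw [Ne, Affine.Point.some.injEq, not_and]
  intro hx hy
  have h2t : 2 * t ≠ 0 := mul_ne_zero h2 ht0
  obtain rfl : r = 0 := (mul_eq_zero.1 (by linear_combination hx : 2 * t * r = 0)).resolve_left h2t
  obtain rfl : n = 0 := (mul_eq_zero.1 (by linear_combination -hy : 2 * t * n = 0)).resolve_left h2t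
  exact hα (by linear_combination (x₀ + α + p) * hr - hn)

end WeierstrassCurve.ofSplitCubic

open Classical in
/-- explicit halves of a point `P = (x₀, y₀)` on the elliptic curve
`E : y² = (x − α)g(x)`, where `g = x² + px + q` is monic irreducible over `K`,
in terms of the trace `Tr` and norm `N` of the quadratic extension `K_g = K[x]/(g)`. -/
theorem explicit_halves_quadratic_ext {K : Type*} [Field K]
    (h2 : (2 : K) ≠ 0) (p q α : K)
    (g : K[X]) (hg : g = X ^ 2 + C p * X + C q) (hirr : Irreducible g)
    (E : WeierstrassCurve K) (hE : E = ⟨0, p - α, 0, q - α * p, -(α * q)⟩)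
    (x₀ y₀ : K) (hP : E.toAffine.Nonsingular x₀ y₀)
    (r : K) (ρ : AdjoinRoot g)
    (hr : r ^ 2 = x₀ - α)
    (hρ : ρ ^ 2 = algebraMap K (AdjoinRoot g) x₀ - AdjoinRoot.root g)
    (hrN : r * Algebra.norm K ρ = -y₀) :
    ∃ (hQplus : E.toAffine.Nonsingular
        (x₀ + Algebra.trace K (AdjoinRoot g) ρ * r + Algebra.norm K ρ)
        (-y₀ - (r + Algebra.trace K (AdjoinRoot g) ρ) *
          (Algebra.trace K (AdjoinRoot g) ρ * r + Algebra.norm K ρ)))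
      (hQminus : E.toAffine.Nonsingular
        (x₀ - Algebra.trace K (AdjoinRoot g) ρ * r + Algebra.norm K ρ)
        (-y₀ - (r - Algebra.trace K (AdjoinRoot g) ρ) *
          (-(Algebra.trace K (AdjoinRoot g) ρ * r) + Algebra.norm K ρ))),
      Affine.Point.some _ _ hQplus ≠ Affine.Point.some _ _ hQminus ∧
      2 • Affine.Point.some _ _ hQplus = Affine.Point.some _ _ hP ∧
      2 • Affine.Point.some _ _ hQminus = Affine.Point.some _ _ hP := by
  subst hE hg
  have := Fact.mk hirr
  have hmonic : (X ^ 2 + C p * X + C q).Monic := by monicity!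
  have hdeg : (X ^ 2 + C p * X + C q).natDegree = 2 := by compute_degree!
  have heval (c : K) : (X ^ 2 + C p * X + C q).eval c = c ^ 2 + p * c + q := by simp
  have hnext : (X ^ 2 + C p * X + C q).nextCoeff = p := by rw [nextCoeff, hdeg]; simp
  have hα : α ^ 2 + p * α + q ≠ 0 := by
    rw [← heval]; exact hirr.not_isRoot_of_natDegree_ne_one (by omega)
  have hn := AdjoinRoot.norm_sq_of_sq_eq_algebraMap_sub_root hmonic hρ
  have ht := AdjoinRoot.trace_sq_of_sq_eq_algebraMap_sub_root hmonic hdeg hρ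
  have ht0 := AdjoinRoot.trace_ne_zero_of_sq_eq_algebraMap_sub_root hmonic hdeg hρ
  rw [heval] at hn
  rw [hnext] at ht
  set t := Algebra.trace K _ ρ
  set n := Algebra.norm K ρ
  obtain ⟨hQplus, hplus⟩ := ofSplitCubic.exists_two_nsmul_some_eq h2 hα hP hr hrN hn ht ht0 rfl rfl
  obtain ⟨hQminus, hminus⟩ := ofSplitCubic.exists_two_nsmul_some_eq (t := -t)
    (x₁ := x₀ - t * r + n) (y₁ := -y₀ - (r - t) * (-(t * r) + n))
    h2 hα hP hr hrN hn (by linear_combination ht) (neg_ne_zero.2 ht0) (by ring) (by ring)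
  exact ⟨hQplus, hQminus, ofSplitCubic.some_ne_some_of_ne_zero h2 hα hr hn ht0 hQplus hQminus,
    hplus, hminus⟩
end

section
/- Let K be a field of characteristic different from 2 and let a, b be nonzero elements of K such that a² + 4b is not a square in K. Then the group of K-points of the elliptic curve E⁽⁴⁾_{a,b} : y² = x(x² + (a² + 2b)x + b²) contains a point of order 8 if and only if there exist r, t ∈ K with r ≠ 0 and t ∉ {0, 1, −1} such that b = −r² and a = 2t²r/(1 − t²). -/
/-!
On `y² = x (x² + A x + B)` the duplication formula reads `x(2P) = (x² - B)² / (2y)²`.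
For `E⁽⁴⁾_{a,b}` we have `A² - 4B = a² (a² + 4b)`, which is not a square, so `T = (0, 0)` is
the only point of order 2, and a point `P` of order 8 is one with `4P = T`. Halving `T` forces
`x(2P)² = b²`, and non-squareness of `a² + 4b` rules out `x(2P) = b`, so `x(2P) = -b`. Then
`r := (x² - b²) / 2y` satisfies `b = -r²`, and the curve equation factors as
`((x - r²)² - 2arx) ((x - r²)² + 2arx) = 0`. After possibly replacing `r` by `-r`,
`t := (x - r²) / (x + r²)` satisfies `t² (a + 2r) = a`, i.e. `a = 2t²r / (1 - t²)`.
Conversely `(r² (1 + t) / (1 - t), 2r³t / (1 - t)²)` is a point of order 8.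
-/

open WeierstrassCurve Affine Point

namespace XMulQuadratic

variable {K : Type*} [Field K] {A B : K}

/-- The curve `y² = x (x² + A x + B)`. -/
abbrev curve (A B : K) : Affine K := (⟨0, A, 0, B, 0⟩ : WeierstrassCurve K).toAffine

lemma curve_equation_iff {x y : K} :
    (curve A B).Equation x y ↔ y ^ 2 = x * (x ^ 2 + A * x + B) := by
  rw [Affine.equation_iff]
  constructor <;> intro h <;> linear_combination h

@[simp]
lemma curve_negY (x y : K) : (curve A B).negY x y = -y := by
  simp [Affine.negY]

lemma curve_Δ : (curve A B).Δ = 16 * B ^ 2 * (A ^ 2 - 4 * B) := by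
  simp only [WeierstrassCurve.Δ, b₂, b₄, b₆, b₈]
  ring

lemma Y_eq_negY_iff (h2 : (2 : K) ≠ 0) {x y : K} : y = (curve A B).negY x y ↔ y = 0 := by
  rw [curve_negY]
  refine ⟨fun h ↦ ?_, fun h ↦ by simp [h]⟩
  have h2y : 2 * y = 0 := by linear_combination h
  simpa [h2] using h2y

variable [DecidableEq K]

lemma add_self_eq_zero_iff (h2 : (2 : K) ≠ 0) {x y : K} (h : (curve A B).Nonsingular x y) :
    some x y h + some x y h = 0 ↔ y = 0 := by
  rw [← Y_eq_negY_iff h2]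
  refine ⟨fun hP ↦ ?_, add_self_of_Y_eq⟩
  by_contra hy
  exact some_ne_zero _ ((add_self_of_Y_ne hy).symm.trans hP)

lemma exists_add_self_eq_some (h2 : (2 : K) ≠ 0) {x y : K} (h : (curve A B).Nonsingular x y)
    (hy : y ≠ 0) : ∃ x' y' h', some x y h + some x y h = some x' y' h' :=
  ⟨_, _, _, add_self_of_Y_ne (mt (Y_eq_negY_iff h2).mp hy)⟩

lemma add_self_eq_some (h2 : (2 : K) ≠ 0) {x y x' y' : K} (h : (curve A B).Nonsingular x y)
    (h' : (curve A B).Nonsingular x' y') (hP : some x y h + some x y h = some x' y' h') :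
    y ≠ 0 ∧ (x ^ 2 - B) ^ 2 = x' * (2 * y) ^ 2 := by
  have hy : y ≠ 0 := fun hy ↦
    some_ne_zero h' (hP.symm.trans ((add_self_eq_zero_iff h2 h).mpr hy))
  have hy' : y ≠ (curve A B).negY x y := mt (Y_eq_negY_iff h2).mp hy
  rw [add_self_of_Y_ne hy', some.injEq] at hP
  have hℓ : (curve A B).slope x x y y * (2 * y) = 3 * x ^ 2 + 2 * A * x + B := by
    rw [slope_of_Y_ne rfl hy', curve_negY, sub_neg_eq_add, ← two_mul,
      div_mul_cancel₀ _ (by simpa [h2])]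
    simp
  refine ⟨hy, ?_⟩
  rw [← hP.1]
  simp only [addX]
  linear_combination (-((curve A B).slope x x y y * (2 * y)) - (3 * x ^ 2 + 2 * A * x + B)) * hℓ
    + 4 * (A + 2 * x) * curve_equation_iff.mp h.1

lemma X_eq_zero_of_add_self_eq_zero (h2 : (2 : K) ≠ 0) (hAB : ¬IsSquare (A ^ 2 - 4 * B))
    {x y : K} (h : (curve A B).Nonsingular x y) (hP : some x y h + some x y h = 0) : x = 0 := by
  have hE := curve_equation_iff.mp h.1
  rw [(add_self_eq_zero_iff h2 h).mp hP] at hE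
  by_contra hx
  have hq : x ^ 2 + A * x + B = 0 :=
    (mul_eq_zero.mp (by linear_combination -hE)).resolve_left hx
  exact hAB ⟨2 * x + A, by linear_combination -4 * hq⟩

lemma X_sq_eq_of_add_self_eq_X_zero (h2 : (2 : K) ≠ 0) {x y y₀ : K}
    (h : (curve A B).Nonsingular x y) (h₀ : (curve A B).Nonsingular 0 y₀)
    (hP : some x y h + some x y h = some 0 y₀ h₀) : x ^ 2 = B := by
  have hx := (add_self_eq_some h2 h h₀ hP).2
  rw [zero_mul, sq_eq_zero_iff] at hx
  exact sub_eq_zero.mp hx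

end XMulQuadratic

namespace E4

open XMulQuadratic

variable {K : Type*} [Field K] {a b : K}

lemma not_isSquare_discr (ha : a ≠ 0) (hab : ¬IsSquare (a ^ 2 + 4 * b)) :
    ¬IsSquare ((a ^ 2 + 2 * b) ^ 2 - 4 * b ^ 2) := by
  rintro ⟨s, hs⟩
  exact hab ⟨s / a, by field_simp; linear_combination hs⟩

lemma X_eq_neg_of_X_sq_eq (hb : b ≠ 0) (hab : ¬IsSquare (a ^ 2 + 4 * b)) {x y : K}
    (hE : (curve (a ^ 2 + 2 * b) (b ^ 2)).Equation x y) (hx : x ^ 2 = b ^ 2) : x = -b := by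
  refine (sq_eq_sq_iff_eq_or_eq_neg.mp hx).resolve_left fun hxb ↦ hab ⟨y / b, ?_⟩
  rw [curve_equation_iff, hxb] at hE
  field_simp
  linear_combination -hE

lemma exists_param_of_sq_eq (h2 : (2 : K) ≠ 0) (ha : a ≠ 0) {r x : K} (hr : r ≠ 0)
    (hx : x ≠ 0) (hab : ¬IsSquare (a ^ 2 + 4 * -r ^ 2))
    (hkey : (x - r ^ 2) ^ 2 = 2 * a * r * x) :
    ∃ t : K, t ≠ 0 ∧ t ≠ 1 ∧ t ≠ -1 ∧ a = 2 * t ^ 2 * r / (1 - t ^ 2) := by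
  have ha2r : a + 2 * r ≠ 0 := fun h ↦ hab ⟨0, by linear_combination (a - 2 * r) * h⟩
  have hsq : (x + r ^ 2) ^ 2 = 2 * r * x * (a + 2 * r) := by linear_combination hkey
  have hxr : x + r ^ 2 ≠ 0 := fun h ↦ by simp [h, h2, hr, hx, ha2r] at hsq
  have hxr' : x - r ^ 2 ≠ 0 := fun h ↦ by simp [h, h2, ha, hr, hx] at hkey
  obtain ⟨t, ht0, ht⟩ : ∃ t : K, t ≠ 0 ∧ t ^ 2 * (a + 2 * r) = a :=
    ⟨(x - r ^ 2) / (x + r ^ 2), div_ne_zero hxr' hxr, by rw [div_pow, hkey, hsq]; field_simp⟩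
  have ht2 : t ^ 2 ≠ 1 := fun h ↦
    hr (by simpa [h2] using (by linear_combination ht - (a + 2 * r) * h : 2 * r = 0))
  refine ⟨t, ht0, fun h ↦ ht2 (by rw [h]; norm_num), fun h ↦ ht2 (by rw [h]; norm_num), ?_⟩
  rw [eq_div_iff (sub_ne_zero.mpr (Ne.symm ht2))]
  linear_combination -ht

lemma exists_param_of_double_X_eq_neg (h2 : (2 : K) ≠ 0) (ha : a ≠ 0) (hb : b ≠ 0)
    (hab : ¬IsSquare (a ^ 2 + 4 * b)) {x y : K}
    (hE : (curve (a ^ 2 + 2 * b) (b ^ 2)).Equation x y) (hy : y ≠ 0)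
    (hx : (x ^ 2 - b ^ 2) ^ 2 = -b * (2 * y) ^ 2) :
    ∃ r t : K, r ≠ 0 ∧ t ≠ 0 ∧ t ≠ 1 ∧ t ≠ -1 ∧
      b = -r ^ 2 ∧ a = 2 * t ^ 2 * r / (1 - t ^ 2) := by
  replace hE := curve_equation_iff.mp hE
  obtain ⟨r, hry⟩ : ∃ r : K, r * (2 * y) = x ^ 2 - b ^ 2 :=
    ⟨_, div_mul_cancel₀ _ (mul_ne_zero h2 hy)⟩
  have hbr : b = -r ^ 2 := mul_right_cancel₀ (pow_ne_zero 2 (mul_ne_zero h2 hy))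
    (by linear_combination hx + (r * (2 * y) + x ^ 2 - b ^ 2) * hry)
  subst hbr
  have hr : r ≠ 0 := by rintro rfl; simp at hb
  have hx0 : x ≠ 0 := by rintro rfl; exact hy (by simpa using hE)
  have hfac :
      ((x - r ^ 2) ^ 2 - 2 * a * r * x) * ((x - r ^ 2) ^ 2 - 2 * a * (-r) * x) = 0 := by
    linear_combination (4 * r ^ 2) * hE - (x ^ 2 + r * (2 * y) - r ^ 4) * hry
  rcases mul_eq_zero.mp hfac with hkey | hkey
  · obtain ⟨t, ht⟩ := exists_param_of_sq_eq h2 ha hr hx0 hab (sub_eq_zero.mp hkey)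
    exact ⟨r, t, hr, ht.1, ht.2.1, ht.2.2.1, rfl, ht.2.2.2⟩
  · obtain ⟨t, ht⟩ := exists_param_of_sq_eq h2 ha (neg_ne_zero.mpr hr) hx0
      (by rwa [neg_sq]) (by rw [neg_sq]; exact sub_eq_zero.mp hkey)
    exact ⟨-r, t, neg_ne_zero.mpr hr, ht.1, ht.2.1, ht.2.2.1, by rw [neg_sq], ht.2.2.2⟩

variable [DecidableEq K]

lemma exists_param_of_addOrderOf_eq_eight (h2 : (2 : K) ≠ 0) (ha : a ≠ 0) (hb : b ≠ 0)
    (hab : ¬IsSquare (a ^ 2 + 4 * b)) (P : (curve (a ^ 2 + 2 * b) (b ^ 2)).Point)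
    (hP : addOrderOf P = 8) :
    ∃ r t : K, r ≠ 0 ∧ t ≠ 0 ∧ t ≠ 1 ∧ t ≠ -1 ∧
      b = -r ^ 2 ∧ a = 2 * t ^ 2 * r / (1 - t ^ 2) := by
  have hne {n : ℕ} (hn0 : n ≠ 0) (hn : n < 8) : n • P ≠ 0 :=
    nsmul_ne_zero_of_lt_addOrderOf hn0 (hP ▸ hn)
  rcases hQ : 4 • P with _ | ⟨x₂, y₂, h₂⟩
  · exact absurd hQ (hne (by norm_num) (by norm_num))
  have hx₂ : x₂ = 0 := X_eq_zero_of_add_self_eq_zero h2 (not_isSquare_discr ha hab) h₂ <| by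
    rw [← hQ, ← two_nsmul, smul_smul, show 2 * 4 = addOrderOf P from hP.symm]
    exact addOrderOf_nsmul_eq_zero P
  subst hx₂
  rcases hR : 2 • P with _ | ⟨x₁, y₁, h₁⟩
  · exact absurd hR (hne (by norm_num) (by norm_num))
  have hx₁ : x₁ = -b := X_eq_neg_of_X_sq_eq hb hab h₁.1 <|
    X_sq_eq_of_add_self_eq_X_zero h2 h₁ h₂ <| by
      rw [← hR, ← two_nsmul, smul_smul, ← hQ]
      rfl
  subst hx₁
  obtain _ | ⟨x, y, h⟩ := P
  · exact absurd rfl (hne one_ne_zero (by norm_num))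
  obtain ⟨hy, hx⟩ := add_self_eq_some h2 h h₁ (by rw [← two_nsmul, hR])
  exact exists_param_of_double_X_eq_neg h2 ha hb hab h.1 hy hx

lemma addOrderOf_eq_eight_of_double_X_eq_neg (h2 : (2 : K) ≠ 0) (ha : a ≠ 0) (hb : b ≠ 0)
    {x y : K} (h : (curve (a ^ 2 + 2 * b) (b ^ 2)).Nonsingular x y) (hy : y ≠ 0)
    (hx : (x ^ 2 - b ^ 2) ^ 2 = -b * (2 * y) ^ 2) : addOrderOf (some x y h) = 8 := by
  obtain ⟨x₁, y₁, h₁, hR⟩ := exists_add_self_eq_some h2 h hy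
  have hx₁ : x₁ = -b := mul_right_cancel₀ (pow_ne_zero 2 (mul_ne_zero h2 hy))
    (by rw [← (add_self_eq_some h2 h h₁ hR).2, hx])
  subst hx₁
  have hy₁ : y₁ ≠ 0 := by
    rintro rfl
    have hE := curve_equation_iff.mp h₁.1
    exact mul_ne_zero (pow_ne_zero 2 ha) (pow_ne_zero 2 hb) (by linear_combination -hE)
  obtain ⟨x₂, y₂, h₂, hQ⟩ := exists_add_self_eq_some h2 h₁ hy₁
  have hx₂ : x₂ = 0 := by
    have hx₂ := (add_self_eq_some h2 h₁ h₂ hQ).2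
    simpa [h2, hy₁] using hx₂.symm
  subst hx₂
  have hy₂ : y₂ = 0 := by simpa using curve_equation_iff.mp h₂.1
  have h4 : (2 * 2) • some x y h = some 0 y₂ h₂ := by
    rw [mul_nsmul, two_nsmul (some x y h), hR, two_nsmul, hQ]
  refine addOrderOf_eq_prime_pow (p := 2) (n := 2) ?_ ?_
  · change ¬(2 * 2) • some x y h = 0
    rw [h4]
    exact some_ne_zero h₂
  · change (2 * 2 * 2) • some x y h = 0
    rw [mul_nsmul, h4, two_nsmul, add_self_eq_zero_iff h2 h₂]
    exact hy₂

lemma exists_addOrderOf_eq_eight_of_param (h2 : (2 : K) ≠ 0) {r t : K} (hr : r ≠ 0)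
    (ht0 : t ≠ 0) (ht1 : t ≠ 1) (ht1' : t ≠ -1) (hab : a ^ 2 + 4 * -r ^ 2 ≠ 0)
    (hat : a = 2 * t ^ 2 * r / (1 - t ^ 2)) :
    ∃ P : (curve (a ^ 2 + 2 * -r ^ 2) ((-r ^ 2) ^ 2)).Point, addOrderOf P = 8 := by
  have h1t : 1 - t ≠ 0 := sub_ne_zero.mpr ht1.symm
  have h1t' : 1 + t ≠ 0 := fun h ↦ ht1' (by linear_combination h)
  have h1t2 : 1 - t ^ 2 ≠ 0 := by
    rw [show 1 - t ^ 2 = (1 - t) * (1 + t) by ring]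
    exact mul_ne_zero h1t h1t'
  have ha : a ≠ 0 := by
    rw [hat]
    exact div_ne_zero (by simp [h2, ht0, hr]) h1t2
  have hb : -r ^ 2 ≠ 0 := by simpa using hr
  have hE : (curve (a ^ 2 + 2 * -r ^ 2) ((-r ^ 2) ^ 2)).Equation
      (r ^ 2 * (1 + t) / (1 - t)) (2 * r ^ 3 * t / (1 - t) ^ 2) := by
    rw [curve_equation_iff, hat]
    field_simp
    ring
  have hΔ : (curve (a ^ 2 + 2 * -r ^ 2) ((-r ^ 2) ^ 2)).Δ ≠ 0 := by
    rw [curve_Δ]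
    have h16 : (16 : K) ≠ 0 := by
      rw [show (16 : K) = 2 ^ 4 by norm_num]
      exact pow_ne_zero 4 h2
    exact mul_ne_zero (mul_ne_zero h16 (by simp [hr])) (by
      rw [show ∀ c : K, (a ^ 2 + 2 * c) ^ 2 - 4 * c ^ 2 = a ^ 2 * (a ^ 2 + 4 * c) by intro; ring]
      exact mul_ne_zero (pow_ne_zero 2 ha) hab)
  refine ⟨_, addOrderOf_eq_eight_of_double_X_eq_neg h2 ha hb
    ((equation_iff_nonsingular_of_Δ_ne_zero hΔ).mp hE) (by simp [h2, hr, ht0, h1t]) ?_⟩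
  field_simp
  ring

end E4

open Classical in
/-- the curve `E⁽⁴⁾_{a,b} : y² = x(x² + (a² + 2b)x + b²)` has a `K`-point of
order 8 if and only if `b = −r²` and `a = 2t²r/(1 − t²)` for some `r ≠ 0` and `t ∉ {0, ±1}`. -/
theorem order_eight_point_on_E4 {K : Type*} [Field K] (h2 : (2 : K) ≠ 0)
    (a b : K) (ha : a ≠ 0) (hb : b ≠ 0) (hab : ¬ IsSquare (a ^ 2 + 4 * b)) :
    (∃ P : (⟨0, a ^ 2 + 2 * b, 0, b ^ 2, 0⟩ : WeierstrassCurve K).toAffine.Point,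
        addOrderOf P = 8) ↔
    ∃ r t : K, r ≠ 0 ∧ t ≠ 0 ∧ t ≠ 1 ∧ t ≠ -1 ∧
      b = -r ^ 2 ∧ a = 2 * t ^ 2 * r / (1 - t ^ 2) := by
  constructor
  · rintro ⟨P, hP⟩
    exact E4.exists_param_of_addOrderOf_eq_eight h2 ha hb hab P hP
  · rintro ⟨r, t, hr, ht0, ht1, ht1', rfl, hat⟩
    exact E4.exists_addOrderOf_eq_eight_of_param h2 hr ht0 ht1 ht1'
      (fun h ↦ hab ⟨0, by rw [h, mul_zero]⟩) hat
end

section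
/- Let K be a field of characteristic different from 2 and let s, t ∈ K be nonzero elements with s, t ≠ ±1 such that neither 2s² − 1 nor 2t² − 1 is a square in K. Consider the elliptic curves E⁽⁸⁾_s : y² = x(x² + 2(s⁴ + 2s² − 1)/(s² − 1)²·x + 1) and E⁽⁸⁾_t : y² = x(x² + 2(t⁴ + 2t² − 1)/(t² − 1)²·x + 1). If K contains no element i with i² = −1, then E⁽⁸⁾_s and E⁽⁸⁾_t are K-isomorphic if and only if s = t, s = −t, or s² + t² = 2s²t². If K contains an element i with i² = −1, then E⁽⁸⁾_s and E⁽⁸⁾_t are K-isomorphic if and only if s = t, s = −t, s² + t² = 2s²t², or s⁴t⁴ + 2s² + 2t² = 4s²t² + 1. -/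
/-!
An isomorphism between two curves `y² = x(x² + Ax + 1)` and `y² = x(x² + Bx + 1)` must send the
`2`-torsion point `(0, 0)` to itself as soon as `x² + Ax + 1` has no root, so it is of the form
`(x, y) ↦ (u²x, u³y)` with `u⁴ = 1`, and `B = u⁻²A = ±A`, the sign `-` being possible only if
`u² = -1`. For `A = A(s) := 2(s⁴ + 2s² − 1)/(s² − 1)²` the discriminant of `x² + Ax + 1` is
`(2s/(s² − 1))⁴ (2s² − 1)`, so this applies, and the criterion comes from factoring
`A(t) − A(s)` and `A(t) + A(s)`.
-/

open WeierstrassCurve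

section

variable {K : Type*} [Field K]

def curveA₂ (A : K) : WeierstrassCurve K := ⟨0, A, 0, 1, 0⟩

theorem eq_or_eq_neg_of_variableChange_smul_curveA₂ (h2 : (2 : K) ≠ 0) {A B : K}
    (hA : ¬IsSquare (discrim 1 A 1)) {C : VariableChange K} (hC : C • curveA₂ A = curveA₂ B) :
    B = A ∨ (B = -A ∧ ∃ i : K, i ^ 2 = -1) := by
  obtain ⟨u, r, s, t⟩ := C
  simp only [curveA₂, variableChange_def, mk.injEq, Units.val_inv_eq_inv_val, zero_add, mul_zero,
    mul_eq_zero, inv_eq_zero, pow_eq_zero_iff, ne_eq, OfNat.ofNat_ne_zero, not_false_eq_true,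
    Units.ne_zero, h2, false_or] at hC
  obtain ⟨rfl, ha₂, rfl, ha₄, ha₆⟩ := hC
  have hr : r = 0 := by
    by_contra hr
    have hroot : 1 * (r * r) + A * r + 1 = 0 := by
      refine (mul_eq_zero.mp (?_ : r * _ = 0)).resolve_left hr
      linear_combination ha₆
    exact hA ⟨_, (discrim_eq_sq_of_quadratic_eq_zero hroot).trans (sq _)⟩
  subst hr
  have hu : ((u : K)⁻¹ ^ 2) ^ 2 = 1 := by linear_combination ha₄
  rcases sq_eq_one_iff.mp hu with h | h
  · exact Or.inl (by linear_combination -ha₂ + A * h)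
  · exact Or.inr ⟨by linear_combination -ha₂ + A * h, _, h⟩

theorem exists_variableChange_smul_curveA₂_neg (A : K) {i : K} (hi : i ^ 2 = -1) :
    ∃ C : VariableChange K, C • curveA₂ A = curveA₂ (-A) := by
  have hi0 : i ≠ 0 := by rintro rfl; simp at hi
  have hi' : i⁻¹ ^ 2 = -1 := by rw [inv_pow, hi, inv_neg_one]
  refine ⟨⟨Units.mk0 i hi0, 0, 0, 0⟩, ?_⟩
  simp only [curveA₂, variableChange_def, Units.val_inv_eq_inv_val, Units.val_mk0, mk.injEq]
  exact ⟨by ring, by linear_combination A * hi', by ring,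
    by linear_combination (i⁻¹ ^ 2 - 1) * hi', by ring⟩

theorem exists_variableChange_smul_curveA₂_iff (h2 : (2 : K) ≠ 0) {A : K}
    (hA : ¬IsSquare (discrim 1 A 1)) (B : K) :
    (∃ C : VariableChange K, C • curveA₂ A = curveA₂ B) ↔
      B = A ∨ (B = -A ∧ ∃ i : K, i ^ 2 = -1) := by
  refine ⟨fun ⟨C, hC⟩ ↦ eq_or_eq_neg_of_variableChange_smul_curveA₂ h2 hA hC, ?_⟩
  rintro (rfl | ⟨rfl, i, hi⟩)
  · exact ⟨1, one_smul _ _⟩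
  · exact exists_variableChange_smul_curveA₂_neg A hi

def orderEightA₂ (t : K) : K := 2 * (t ^ 4 + 2 * t ^ 2 - 1) / (t ^ 2 - 1) ^ 2

theorem discrim_orderEightA₂ {t : K} (ht : t ^ 2 ≠ 1) :
    discrim 1 (orderEightA₂ t) 1 = (2 * t / (t ^ 2 - 1)) ^ 4 * (2 * t ^ 2 - 1) := by
  have ht' : t ^ 2 - 1 ≠ 0 := sub_ne_zero.mpr ht
  rw [discrim, orderEightA₂]
  field_simp
  ring

theorem not_isSquare_discrim_orderEightA₂ (h2 : (2 : K) ≠ 0) {t : K} (ht0 : t ≠ 0)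
    (ht : t ^ 2 ≠ 1) (htq : ¬IsSquare (2 * t ^ 2 - 1)) :
    ¬IsSquare (discrim 1 (orderEightA₂ t) 1) := by
  rw [discrim_orderEightA₂ ht]
  intro hsq
  apply htq
  have hc : 2 * t / (t ^ 2 - 1) ≠ 0 := div_ne_zero (mul_ne_zero h2 ht0) (sub_ne_zero.mpr ht)
  have h := (IsSquare.sq ((2 * t / (t ^ 2 - 1)) ^ 2)⁻¹).mul hsq
  rwa [inv_pow, ← pow_mul, inv_mul_cancel_left₀ (pow_ne_zero _ hc)] at h

theorem orderEightA₂_eq_iff (h2 : (2 : K) ≠ 0) {s t : K} (hs : s ^ 2 ≠ 1) (ht : t ^ 2 ≠ 1) :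
    orderEightA₂ t = orderEightA₂ s ↔ s = t ∨ s = -t ∨ s ^ 2 + t ^ 2 = 2 * s ^ 2 * t ^ 2 := by
  have hs' : (s ^ 2 - 1) ^ 2 ≠ 0 := pow_ne_zero _ (sub_ne_zero.mpr hs)
  have ht' : (t ^ 2 - 1) ^ 2 ≠ 0 := pow_ne_zero _ (sub_ne_zero.mpr ht)
  rw [orderEightA₂, orderEightA₂, div_eq_div_iff ht' hs']
  constructor
  · intro h
    have h0 : 2 * (2 * ((s - t) * ((s + t) * (s ^ 2 + t ^ 2 - 2 * s ^ 2 * t ^ 2)))) = 0 := by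
      linear_combination -h
    simpa [h2, sub_eq_zero, add_eq_zero_iff_eq_neg] using h0
  · rintro (rfl | rfl | h)
    · rfl
    · ring
    · linear_combination (-4 * (s ^ 2 - t ^ 2)) * h

theorem orderEightA₂_eq_neg_iff (h2 : (2 : K) ≠ 0) {s t : K} (hs : s ^ 2 ≠ 1) (ht : t ^ 2 ≠ 1) :
    orderEightA₂ t = -orderEightA₂ s ↔
      s ^ 4 * t ^ 4 + 2 * s ^ 2 + 2 * t ^ 2 = 4 * s ^ 2 * t ^ 2 + 1 := by
  have hs' : (s ^ 2 - 1) ^ 2 ≠ 0 := pow_ne_zero _ (sub_ne_zero.mpr hs)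
  have ht' : (t ^ 2 - 1) ^ 2 ≠ 0 := pow_ne_zero _ (sub_ne_zero.mpr ht)
  rw [orderEightA₂, orderEightA₂, ← neg_div, div_eq_div_iff ht' hs']
  constructor
  · intro h
    have h0 : 2 * (2 * (s ^ 4 * t ^ 4 + 2 * s ^ 2 + 2 * t ^ 2 - (4 * s ^ 2 * t ^ 2 + 1))) = 0 := by
      linear_combination h
    simpa [h2, sub_eq_zero] using h0
  · intro h
    linear_combination 4 * h

end

theorem isomorphism_criterion_order_eight_curves_general {K : Type*} [Field K] (h2 : (2 : K) ≠ 0)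
    (s t : K) (hs0 : s ≠ 0) (hs1 : s ≠ 1) (hs1' : s ≠ -1)
    (ht1 : t ≠ 1) (ht1' : t ≠ -1)
    (hsq : ¬ IsSquare (2 * s ^ 2 - 1)) :
    ((¬ ∃ i : K, i ^ 2 = -1) →
      ((∃ C : VariableChange K,
          C • (⟨0, 2 * (s ^ 4 + 2 * s ^ 2 - 1) / (s ^ 2 - 1) ^ 2, 0, 1, 0⟩ :
            WeierstrassCurve K) =
            ⟨0, 2 * (t ^ 4 + 2 * t ^ 2 - 1) / (t ^ 2 - 1) ^ 2, 0, 1, 0⟩) ↔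
        (s = t ∨ s = -t ∨ s ^ 2 + t ^ 2 = 2 * s ^ 2 * t ^ 2))) ∧
    ((∃ i : K, i ^ 2 = -1) →
      ((∃ C : VariableChange K,
          C • (⟨0, 2 * (s ^ 4 + 2 * s ^ 2 - 1) / (s ^ 2 - 1) ^ 2, 0, 1, 0⟩ :
            WeierstrassCurve K) =
            ⟨0, 2 * (t ^ 4 + 2 * t ^ 2 - 1) / (t ^ 2 - 1) ^ 2, 0, 1, 0⟩) ↔
        (s = t ∨ s = -t ∨ s ^ 2 + t ^ 2 = 2 * s ^ 2 * t ^ 2 ∨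
          s ^ 4 * t ^ 4 + 2 * s ^ 2 + 2 * t ^ 2 = 4 * s ^ 2 * t ^ 2 + 1))) := by
  have hs : s ^ 2 ≠ 1 := sq_ne_one_iff.mpr ⟨hs1, hs1'⟩
  have ht : t ^ 2 ≠ 1 := sq_ne_one_iff.mpr ⟨ht1, ht1'⟩
  have key := exists_variableChange_smul_curveA₂_iff h2
    (not_isSquare_discrim_orderEightA₂ h2 hs0 hs hsq) (orderEightA₂ t)
  rw [orderEightA₂_eq_iff h2 hs ht, orderEightA₂_eq_neg_iff h2 hs ht] at key
  exact ⟨fun hi ↦ key.trans (or_iff_left fun h ↦ hi h.2),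
    fun hi ↦ key.trans (by simp only [hi, and_true, or_assoc])⟩

/-- isomorphism criterion for the curves
`E⁽⁸⁾_t : y² = x(x² + 2(t⁴ + 2t² − 1)/(t² − 1)²·x + 1)`, depending on whether `K` contains
a primitive 4th root of unity. -/
theorem isomorphism_criterion_order_eight_curves {K : Type*} [Field K] (h2 : (2 : K) ≠ 0)
    (s t : K) (hs0 : s ≠ 0) (ht0 : t ≠ 0) (hs1 : s ≠ 1) (hs1' : s ≠ -1)
    (ht1 : t ≠ 1) (ht1' : t ≠ -1)
    (hsq : ¬ IsSquare (2 * s ^ 2 - 1)) (htq : ¬ IsSquare (2 * t ^ 2 - 1)) :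
    ((¬ ∃ i : K, i ^ 2 = -1) →
      ((∃ C : VariableChange K,
          C • (⟨0, 2 * (s ^ 4 + 2 * s ^ 2 - 1) / (s ^ 2 - 1) ^ 2, 0, 1, 0⟩ :
            WeierstrassCurve K) =
            ⟨0, 2 * (t ^ 4 + 2 * t ^ 2 - 1) / (t ^ 2 - 1) ^ 2, 0, 1, 0⟩) ↔
        (s = t ∨ s = -t ∨ s ^ 2 + t ^ 2 = 2 * s ^ 2 * t ^ 2))) ∧
    ((∃ i : K, i ^ 2 = -1) →
      ((∃ C : VariableChange K,
          C • (⟨0, 2 * (s ^ 4 + 2 * s ^ 2 - 1) / (s ^ 2 - 1) ^ 2, 0, 1, 0⟩ :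
            WeierstrassCurve K) =
            ⟨0, 2 * (t ^ 4 + 2 * t ^ 2 - 1) / (t ^ 2 - 1) ^ 2, 0, 1, 0⟩) ↔
        (s = t ∨ s = -t ∨ s ^ 2 + t ^ 2 = 2 * s ^ 2 * t ^ 2 ∨
          s ^ 4 * t ^ 4 + 2 * s ^ 2 + 2 * t ^ 2 = 4 * s ^ 2 * t ^ 2 + 1))) :=
  isomorphism_criterion_order_eight_curves_general h2 s t hs0 hs1 hs1' ht1 ht1' hsq
end

section
/- Let K be a field of characteristic 2 and let E be an elliptic curve over K. Then E(K) contains a point of order 2 if and only if the j-invariant j(E) is a nonzero square in K, i.e., there exists a nonzero c ∈ K with j(E) = c². -/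
/-!
A point of order 2 is an affine point with `y = -y - a₁x - a₃`, which in characteristic 2 means
`a₁x = a₃`. Since `a₃ ≠ 0` when `a₁ = 0`, this forces `a₁ ≠ 0`, and then the curve equation at
`x = a₃/a₁` reads `y² = f(x)` with `a₁⁶ f(x) = Δ + (a₁²a₄ + a₃²)²`. Squaring being additive,
such a `y` exists iff `Δ` is a square. Finally `j = a₁¹²/Δ`, so `j` is a nonzero square iff
`a₁ ≠ 0` and `Δ` is a square.
-/

open WeierstrassCurve

namespace WeierstrassCurve

namespace Affine

lemma Point.exists_addOrderOf_eq_two_iff {F : Type*} [Field F] [DecidableEq F]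
    (W : WeierstrassCurve.Affine F) :
    (∃ P : W.Point, addOrderOf P = 2) ↔ ∃ x y, W.Nonsingular x y ∧ W.negY x y = y := by
  simp_rw [addOrderOf_eq_prime_iff, two_nsmul, add_eq_zero_iff_eq_neg]
  constructor
  · rintro ⟨_ | @⟨x, y, h⟩, hP, hP0⟩
    · exact absurd rfl hP0
    · exact ⟨x, y, h, by simpa using hP.symm⟩
  · rintro ⟨x, y, h, hy⟩
    exact ⟨.some _ _ h, by simp only [Point.neg_some, hy], Point.some_ne_zero h⟩

variable {R : Type*} [CommRing R] [CharP R 2] (W : WeierstrassCurve.Affine R)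

lemma negY_of_char_two (x y : R) : W.negY x y = y + W.a₁ * x + W.a₃ := by
  simp only [negY, CharTwo.sub_eq_add, CharTwo.neg_eq]

lemma negY_eq_self_iff_of_char_two {x y : R} : W.negY x y = y ↔ W.a₁ * x = W.a₃ := by
  rw [negY_of_char_two, add_assoc, add_eq_left, CharTwo.add_eq_zero]

end Affine

section CharTwo

variable {F : Type*} [Field F] [CharP F 2] (W : WeierstrassCurve F)

lemma a₃_ne_zero_of_char_two_of_a₁_eq_zero [W.IsElliptic] (ha₁ : W.a₁ = 0) : W.a₃ ≠ 0 := by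
  intro ha₃
  apply W.isUnit_Δ.ne_zero
  rw [Δ_of_char_two, ha₁, ha₃]
  ring

lemma equation_iff_sq_eq_Δ_of_char_two {x y : F} (ha₁ : W.a₁ ≠ 0) (hx : W.a₁ * x = W.a₃) :
    W.toAffine.Equation x y ↔ (W.a₁ ^ 3 * y + W.a₁ ^ 2 * W.a₄ + W.a₃ ^ 2) ^ 2 = W.Δ := by
  have h2 : (2 : F) = 0 := CharTwo.two_eq_zero
  have key : (W.a₁ ^ 3 * y + W.a₁ ^ 2 * W.a₄ + W.a₃ ^ 2) ^ 2 - W.Δ = W.a₁ ^ 6 *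
      (y ^ 2 + W.a₁ * x * y + W.a₃ * y - (x ^ 3 + W.a₂ * x ^ 2 + W.a₄ * x + W.a₆)) := by
    rw [Δ_of_char_two, b₈_of_char_two]
    linear_combination (W.a₁ ^ 3 * (W.a₁ ^ 2 * x ^ 2 + W.a₁ * x * W.a₃ + W.a₃ ^ 2)
        + W.a₁ ^ 4 * W.a₂ * (W.a₁ * x + W.a₃) + W.a₁ ^ 5 * W.a₄ - W.a₁ ^ 6 * y) * hx
      + (W.a₁ ^ 2 * W.a₄ * W.a₃ ^ 2 + W.a₁ ^ 3 * y * W.a₃ ^ 2 + W.a₁ ^ 5 * y * W.a₄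
        - W.a₁ ^ 6 * y * W.a₃) * h2
  rw [Affine.equation_iff, ← sub_eq_zero, ← sub_eq_zero (a := _ ^ 2), key,
    mul_eq_zero, or_iff_right (pow_ne_zero 6 ha₁)]

lemma exists_equation_and_a₁_mul_eq_iff_of_char_two [W.IsElliptic] :
    (∃ x y, W.toAffine.Equation x y ∧ W.a₁ * x = W.a₃) ↔ W.a₁ ≠ 0 ∧ IsSquare W.Δ := by
  constructor
  · rintro ⟨x, y, heq, hx⟩
    have ha₁ : W.a₁ ≠ 0 := fun ha₁ ↦
      W.a₃_ne_zero_of_char_two_of_a₁_eq_zero ha₁ (by rw [← hx, ha₁, zero_mul])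
    exact ⟨ha₁, _, ((W.equation_iff_sq_eq_Δ_of_char_two ha₁ hx).mp heq).symm.trans (sq _)⟩
  · rintro ⟨ha₁, s, hs⟩
    refine ⟨W.a₃ / W.a₁, (s - W.a₁ ^ 2 * W.a₄ - W.a₃ ^ 2) / W.a₁ ^ 3, ?_, by field_simp⟩
    rw [W.equation_iff_sq_eq_Δ_of_char_two ha₁ (by field_simp), hs]
    field_simp
    ring

lemma exists_ne_zero_and_j_eq_sq_iff_of_char_two [W.IsElliptic] :
    (∃ c, c ≠ 0 ∧ W.j = c ^ 2) ↔ W.a₁ ≠ 0 ∧ IsSquare W.Δ := by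
  have hΔ : W.Δ ≠ 0 := W.isUnit_Δ.ne_zero
  have hj : W.j = W.a₁ ^ 12 / W.Δ := by
    rw [j_of_char_two, Units.val_inv_eq_inv_val, coe_Δ', inv_mul_eq_div]
  constructor
  · rintro ⟨c, hc, hjc⟩
    have ha₁ : W.a₁ ≠ 0 := fun ha₁ ↦
      hc (pow_eq_zero_iff two_ne_zero |>.mp (hjc ▸ W.j_eq_zero_of_char_two ha₁))
    refine ⟨ha₁, W.a₁ ^ 6 / c, ?_⟩
    rw [hj] at hjc
    field_simp at hjc ⊢
    exact hjc.symm
  · rintro ⟨ha₁, s, hs⟩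
    have hs0 : s ≠ 0 := by
      rintro rfl
      exact hΔ (by rw [hs, mul_zero])
    refine ⟨W.a₁ ^ 6 / s, div_ne_zero (pow_ne_zero 6 ha₁) hs0, ?_⟩
    rw [hj, hs]
    ring

end CharTwo

end WeierstrassCurve

open Classical in
/-- over a field of characteristic 2, an elliptic curve has a `K`-rational
point of order 2 if and only if its j-invariant is a nonzero square in `K`. -/
theorem order_two_point_char_two {K : Type*} [Field K] [CharP K 2]
    (E : WeierstrassCurve K) [E.IsElliptic] :
    (∃ P : E.toAffine.Point, addOrderOf P = 2) ↔ ∃ c : K, c ≠ 0 ∧ E.j = c ^ 2 := by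
  simp_rw [Affine.Point.exists_addOrderOf_eq_two_iff, ← E.toAffine.equation_iff_nonsingular,
    Affine.negY_eq_self_iff_of_char_two]
  rw [exists_equation_and_a₁_mul_eq_iff_of_char_two, exists_ne_zero_and_j_eq_sq_iff_of_char_two]
end

section
/- Let K be a field of characteristic 2 and let E be the elliptic curve over K given by y² + xy = x³ + a₂x² + a₆ with a₂, a₆ ∈ K and a₆ ≠ 0. Suppose there exists β ∈ K with a₆ = β². Then a point P = (x₀, y₀) ∈ E(K) is divisible by 2 in E(K) if and only if the following three conditions hold: (i) there exists r ∈ K with r² = x₀; (ii) there exists l ∈ K with l² + l = x₀ + a₂; (iii) if x₀ = 0, then there exists δ ∈ K with δ⁴ = a₆. -/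
/-!
A point `Q = (x, y)` with `x = 0` is 2-torsion. Otherwise the tangent at `Q` has slope
`ℓ = x + y / x`, and `x(2Q) = ℓ² + ℓ + a₂`, which the curve equation turns into
`x² + a₆ / x² = (x + β / x)²`. Since `2(-Q) = -2Q`, the point `P` is a double exactly when its
abscissa is one, i.e. when `x₀ + a₂ = ℓ² + ℓ` is solvable and `x² + r x = β` has a nonzero root,
where `r² = x₀`. For `x₀ = 0` such a root is a fourth root of `a₆`; for `x₀ ≠ 0` it is obtained
from `P` itself by an Artin–Schreier substitution.
-/

open WeierstrassCurve

namespace WeierstrassCurve.Affine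

section Halving

variable {F : Type*} [Field F] [DecidableEq F] {W : Affine F}

lemma exists_two_smul_eq_some_iff {x₀ y₀ : F} (hP : W.Nonsingular x₀ y₀) :
    (∃ Q : W.Point, 2 • Q = .some x₀ y₀ hP) ↔
      ∃ x y, W.Nonsingular x y ∧ y ≠ W.negY x y ∧ W.addX x x (W.slope x x y y) = x₀ := by
  constructor
  · rintro ⟨_ | ⟨x, y, h⟩, hQ⟩
    · exact absurd hQ.symm (Point.some_ne_zero hP)
    · by_cases hy : y = W.negY x y
      · rw [two_smul, Point.add_self_of_Y_eq hy] at hQ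
        exact absurd hQ.symm (Point.some_ne_zero hP)
      · rw [two_smul, Point.add_self_of_Y_ne hy, Point.some.injEq] at hQ
        exact ⟨x, y, h, hy, hQ.1⟩
  · rintro ⟨x, y, h, hy, hx⟩
    have h2Q : 2 • Point.some x y h = .some _ _ (nonsingular_add h h fun hxy => hy hxy.2) := by
      rw [two_smul, Point.add_self_of_Y_ne hy]
    rcases Point.X_eq_iff.mp hx with h2Q' | h2Q'
    · exact ⟨_, h2Q.trans h2Q'⟩
    · exact ⟨-Point.some x y h, by rw [smul_neg, h2Q, h2Q', neg_neg]⟩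

end Halving

section CharTwo

variable {R : Type*} [CommRing R] {W : WeierstrassCurve R} [W.IsCharTwoJNeZeroNF]

lemma equation_iff_of_isCharTwoJNeZeroNF {x y : R} :
    W.toAffine.Equation x y ↔ y ^ 2 + x * y = x ^ 3 + W.a₂ * x ^ 2 + W.a₆ := by
  simp [equation_iff]

variable [CharP R 2]

lemma negY_of_isCharTwoJNeZeroNF (x y : R) : W.toAffine.negY x y = y + x := by
  simp [negY, CharTwo.sub_eq_add, CharTwo.neg_eq, add_comm]

lemma Y_ne_negY_iff_of_isCharTwoJNeZeroNF {x y : R} : y ≠ W.toAffine.negY x y ↔ x ≠ 0 := by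
  rw [negY_of_isCharTwoJNeZeroNF, ne_eq, left_eq_add]

lemma nonsingular_of_isCharTwoJNeZeroNF {x y : R} (h : W.toAffine.Equation x y) (hx : x ≠ 0) :
    W.toAffine.Nonsingular x y :=
  ⟨h, Or.inr (by simpa [evalEval_polynomialY, CharTwo.two_eq_zero] using hx)⟩

lemma addX_self_of_isCharTwoJNeZeroNF (x ℓ : R) :
    W.toAffine.addX x x ℓ = ℓ ^ 2 + ℓ + W.a₂ := by
  simp [addX, CharTwo.sub_eq_add, add_assoc, CharTwo.add_self_eq_zero]

end CharTwo

section CharTwoField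

variable {K : Type*} [Field K] [CharP K 2] {W : WeierstrassCurve K} [W.IsCharTwoJNeZeroNF]

lemma a₆_ne_zero_of_nonsingular_zero_of_isCharTwoJNeZeroNF {y : K}
    (h : W.toAffine.Nonsingular 0 y) : W.a₆ ≠ 0 := by
  have hy : y ≠ 0 := by simpa [CharTwo.two_eq_zero] using ((nonsingular_iff' 0 y).mp h).2
  have hQ : y ^ 2 = W.a₆ := by simpa [equation_iff] using h.1
  exact hQ ▸ pow_ne_zero 2 hy

variable [DecidableEq K]

lemma slope_self_mul_of_isCharTwoJNeZeroNF {x y : K} (hx : x ≠ 0) :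
    W.toAffine.slope x x y y * x = x ^ 2 + y := by
  rw [slope_of_Y_ne rfl (Y_ne_negY_iff_of_isCharTwoJNeZeroNF.mpr hx), negY_of_isCharTwoJNeZeroNF]
  field_simp
  simp only [a₄_of_isCharTwoJNeZeroNF, a₁_of_isCharTwoJNeZeroNF, add_zero, one_mul,
    sub_add_cancel_left]
  grind

lemma exists_two_smul_eq_some_iff_of_isCharTwoJNeZeroNF {x₀ y₀ : K}
    (hP : W.toAffine.Nonsingular x₀ y₀) :
    (∃ Q : W.toAffine.Point, 2 • Q = .some x₀ y₀ hP) ↔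
      (∃ x ≠ 0, x₀ * x ^ 2 = x ^ 4 + W.a₆) ∧ ∃ ℓ, ℓ ^ 2 + ℓ = x₀ + W.a₂ := by
  rw [exists_two_smul_eq_some_iff]
  constructor
  · rintro ⟨x, y, h, hy, hx₀⟩
    rw [Y_ne_negY_iff_of_isCharTwoJNeZeroNF] at hy
    rw [addX_self_of_isCharTwoJNeZeroNF] at hx₀
    have hℓ := slope_self_mul_of_isCharTwoJNeZeroNF (W := W) (y := y) hy
    have hQ := equation_iff_of_isCharTwoJNeZeroNF.mp h.1
    exact ⟨⟨x, hy, by grind⟩, W.toAffine.slope x x y y, by grind⟩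
  · rintro ⟨⟨x, hx, hx₀⟩, ℓ, hℓ⟩
    have hQ : W.toAffine.Equation x (ℓ * x + x ^ 2) := by
      rw [equation_iff_of_isCharTwoJNeZeroNF]; grind
    have hslope : W.toAffine.slope x x (ℓ * x + x ^ 2) (ℓ * x + x ^ 2) = ℓ :=
      mul_right_cancel₀ hx (by rw [slope_self_mul_of_isCharTwoJNeZeroNF hx]; grind)
    refine ⟨x, _, nonsingular_of_isCharTwoJNeZeroNF hQ hx,
      Y_ne_negY_iff_of_isCharTwoJNeZeroNF.mpr hx, ?_⟩
    rw [hslope, addX_self_of_isCharTwoJNeZeroNF]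
    grind

end CharTwoField

end WeierstrassCurve.Affine

instance WeierstrassCurve.isCharTwoJNeZeroNF_mk {R : Type*} [CommRing R] (a₂ a₆ : R) :
    (⟨1, a₂, 0, 0, a₆⟩ : WeierstrassCurve R).IsCharTwoJNeZeroNF :=
  ⟨rfl, rfl, rfl⟩

lemma exists_ne_zero_sq_add_self_eq {R : Type*} [Ring R] [Nontrivial R] {c : R}
    (h : ∃ t, t ^ 2 + t = c) : ∃ t ≠ 0, t ^ 2 + t = c := by
  obtain ⟨t, ht⟩ := h
  rcases eq_or_ne t 0 with rfl | ht0
  · exact ⟨-1, neg_ne_zero.mpr one_ne_zero, by simp [← ht]⟩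
  · exact ⟨t, ht0, ht⟩

-- With `u = y₀ / r²`, the curve equation reads `u² + u = r² + a₂ + (β / r²)²`, so
-- `t = u + ℓ + β / r²` solves `t² + t = β / r²`; take `x = r t`.
lemma exists_ne_zero_sq_add_mul_eq {K : Type*} [Field K] [CharP K 2] {r y₀ a₂ β ℓ : K}
    (hr : r ≠ 0) (hP : y₀ ^ 2 + r ^ 2 * y₀ = r ^ 6 + a₂ * r ^ 4 + β ^ 2)
    (hℓ : ℓ ^ 2 + ℓ = r ^ 2 + a₂) : ∃ x ≠ 0, x ^ 2 + r * x = β := by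
  obtain ⟨t, ht0, ht⟩ : ∃ t ≠ 0, t ^ 2 + t = β / r ^ 2 := by
    refine exists_ne_zero_sq_add_self_eq ⟨(y₀ + ℓ * r ^ 2 + β) / r ^ 2, ?_⟩
    field_simp
    grind
  refine ⟨r * t, mul_ne_zero hr ht0, ?_⟩
  field_simp at ht
  grind

open WeierstrassCurve.Affine

open Classical in
theorem divisible_by_two_char_two_general {K : Type*} [Field K] [CharP K 2]
    (a₂ a₆ : K) (β : K) (hβ : a₆ = β ^ 2)
    (x₀ y₀ : K)
    (hP : (⟨1, a₂, 0, 0, a₆⟩ : WeierstrassCurve K).toAffine.Nonsingular x₀ y₀) :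
    (∃ Q : (⟨1, a₂, 0, 0, a₆⟩ : WeierstrassCurve K).toAffine.Point,
        2 • Q = Affine.Point.some x₀ y₀ hP) ↔
    ((∃ r : K, r ^ 2 = x₀) ∧ (∃ l : K, l ^ 2 + l = x₀ + a₂) ∧
      (x₀ = 0 → ∃ δ : K, δ ^ 4 = a₆)) := by
  rw [exists_two_smul_eq_some_iff_of_isCharTwoJNeZeroNF]
  have hPe : y₀ ^ 2 + x₀ * y₀ = x₀ ^ 3 + a₂ * x₀ ^ 2 + a₆ :=
    equation_iff_of_isCharTwoJNeZeroNF.mp hP.1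
  subst hβ
  constructor
  · rintro ⟨⟨x, hx, hx₀⟩, hℓ⟩
    refine ⟨⟨(x ^ 2 + β) / x, ?_⟩, hℓ, fun h0 => ⟨x, by grind⟩⟩
    field_simp
    grind
  · rintro ⟨⟨r, rfl⟩, hℓ, h0⟩
    refine ⟨?_, hℓ⟩
    rcases eq_or_ne r 0 with rfl | hr
    · obtain ⟨δ, hδ⟩ := h0 (zero_pow two_ne_zero)
      have hδ0 : δ ≠ 0 := by
        rintro rfl
        exact a₆_ne_zero_of_nonsingular_zero_of_isCharTwoJNeZeroNF (by simpa using hP)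
          (by simpa using hδ.symm)
      exact ⟨δ, hδ0, by grind⟩
    · obtain ⟨ℓ, hℓ⟩ := hℓ
      have hPr : y₀ ^ 2 + r ^ 2 * y₀ = r ^ 6 + a₂ * r ^ 4 + β ^ 2 := by linear_combination hPe
      obtain ⟨x, hx, hxr⟩ := exists_ne_zero_sq_add_mul_eq hr hPr hℓ
      exact ⟨x, hx, by grind⟩

open Classical in
/-- divisibility by 2 on the ordinary elliptic curve
`y² + xy = x³ + a₂x² + a₆` over a field of characteristic 2, when `a₆` is a square. -/
theorem divisible_by_two_char_two {K : Type*} [Field K] [CharP K 2]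
    (a₂ a₆ : K) (ha₆ : a₆ ≠ 0) (β : K) (hβ : a₆ = β ^ 2)
    (x₀ y₀ : K)
    (hP : (⟨1, a₂, 0, 0, a₆⟩ : WeierstrassCurve K).toAffine.Nonsingular x₀ y₀) :
    (∃ Q : (⟨1, a₂, 0, 0, a₆⟩ : WeierstrassCurve K).toAffine.Point,
        2 • Q = Affine.Point.some x₀ y₀ hP) ↔
    ((∃ r : K, r ^ 2 = x₀) ∧ (∃ l : K, l ^ 2 + l = x₀ + a₂) ∧
      (x₀ = 0 → ∃ δ : K, δ ^ 4 = a₆)) :=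
  divisible_by_two_char_two_general a₂ a₆ β hβ x₀ y₀ hP
end
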